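/- arXiv:2010.13165 — 11 statements merged into one kernel-verified Lean document; each statement's English description precedes it below -/
import Mathlib

section
/- Let n be a positive integer, let H be a symmetric positive semidefinite real n×n matrix, and let λ₀ > 0 satisfy vᵀHv ≥ (λ₀/2)‖v‖² for every v ∈ ℝⁿ. Set α := √(λ₀/2). Let Δ : ℝ → ℝⁿ be twice continuously differentiable and satisfy the Heavy Ball error dynamics Δ''(t) + 2α·Δ'(t) + H·Δ(t) = 0 for all t ≥ 0. Then the Lyapunov function V(t) := (1/2)⟨Δ(t), H·Δ(t)⟩ + (1/2)‖α·Δ(t) + Δ'(t)‖² satisfies V'(t) ≤ −α·V(t) for all t ≥ 0. -/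
open Real Matrix Set Filter

/-- Heavy Ball error dynamics: the Lyapunov function
`V(t) = (1/2)⟨Δ(t), HΔ(t)⟩ + (1/2)‖αΔ(t) + Δ'(t)‖²` satisfies `V'(t) ≤ -α V(t)`. -/
theorem heavy_ball_lyapunov_deriv
    (n : ℕ) (hn : 0 < n) (H : Matrix (Fin n) (Fin n) ℝ)
    (hsymm : H.IsSymm) (hpsd : H.PosSemidef)
    (lam : ℝ) (hlam : 0 < lam)
    (hlow : ∀ v : Fin n → ℝ, lam / 2 * (∑ i, (v i) ^ 2) ≤ v ⬝ᵥ H.mulVec v)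
    (α : ℝ) (hα : α = Real.sqrt (lam / 2))
    (Δ : ℝ → (Fin n → ℝ)) (hΔ : ContDiff ℝ 2 Δ)
    (hODE : ∀ t : ℝ, 0 ≤ t →
      deriv (deriv Δ) t + (2 * α) • deriv Δ t + H.mulVec (Δ t) = 0) :
    ∀ t : ℝ, 0 ≤ t →
      deriv (fun s => (1 / 2) * (Δ s ⬝ᵥ H.mulVec (Δ s))
          + (1 / 2) * ∑ i, (α * Δ s i + deriv Δ s i) ^ 2) t
        ≤ -α * ((1 / 2) * (Δ t ⬝ᵥ H.mulVec (Δ t))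
          + (1 / 2) * ∑ i, (α * Δ t i + deriv Δ t i) ^ 2) := by
  intro t ht
  have hαpos : 0 < α := by
    rw [hα]; exact Real.sqrt_pos.mpr (by linarith)
  have hα2 : α ^ 2 = lam / 2 := by
    rw [hα, sq_sqrt (by linarith : (0:ℝ) ≤ lam / 2)]
  have h1 : Differentiable ℝ Δ := hΔ.differentiable two_ne_zero
  have h2 : Differentiable ℝ (deriv Δ) :=
    ((contDiff_succ_iff_deriv.mp
      (by exact_mod_cast hΔ : ContDiff ℝ ((1:ℕ)+1) Δ)).2.2).differentiable (by norm_num)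
  set u : Fin n → ℝ := Δ t with hu_def
  set v : Fin n → ℝ := deriv Δ t with hv_def
  set w : Fin n → ℝ := deriv (deriv Δ) t with hw_def
  have hu : HasDerivAt Δ v t := (h1 t).hasDerivAt
  have hv : HasDerivAt (deriv Δ) w t := (h2 t).hasDerivAt
  have hui : ∀ i, HasDerivAt (fun s => Δ s i) (v i) t := fun i => hasDerivAt_pi.mp hu i
  have hvi : ∀ i, HasDerivAt (fun s => deriv Δ s i) (w i) t := fun i => hasDerivAt_pi.mp hv i
  -- `Hu` and `Hv` abbreviations
  set Hu : Fin n → ℝ := H.mulVec u with hHu_def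
  set Hv : Fin n → ℝ := H.mulVec v with hHv_def
  have hHu : ∀ i, Hu i = ∑ j, H i j * u j := fun i => by
    simp [hHu_def, Matrix.mulVec, dotProduct]
  have hHv : ∀ i, Hv i = ∑ j, H i j * v j := fun i => by
    simp [hHv_def, Matrix.mulVec, dotProduct]
  -- derivative of the Lyapunov function
  have hVd : HasDerivAt
      (fun s => (1 / 2) * (Δ s ⬝ᵥ H.mulVec (Δ s))
          + (1 / 2) * ∑ i, (α * Δ s i + deriv Δ s i) ^ 2)
      ((1/2) * (∑ i, (v i * Hu i + u i * Hv i))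
        + (1/2) * ∑ i, (2 * (α * u i + v i) ^ (2-1) * (α * v i + w i))) t := by
    apply HasDerivAt.add
    · have heq : (fun s => Δ s ⬝ᵥ H.mulVec (Δ s))
          = fun s => ∑ i, Δ s i * ∑ j, H i j * Δ s j := by
        funext s; simp [Matrix.mulVec, dotProduct]
      have : HasDerivAt (fun s => ∑ i, Δ s i * ∑ j, H i j * Δ s j)
          (∑ i, (v i * Hu i + u i * Hv i)) t := by
        apply HasDerivAt.fun_sum
        intro i _
        have hsum : HasDerivAt (fun s => ∑ j, H i j * Δ s j) (∑ j, H i j * v j) t := by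
          apply HasDerivAt.fun_sum
          intro j _
          exact (hui j).const_mul (H i j)
        have := (hui i).mul hsum
        rw [hHu, hHv]
        exact this
      have hdot : HasDerivAt (fun s => Δ s ⬝ᵥ H.mulVec (Δ s))
          (∑ i, (v i * Hu i + u i * Hv i)) t := by
        rw [heq]; exact this
      exact hdot.const_mul (1/2)
    · have : HasDerivAt (fun s => ∑ i, (α * Δ s i + deriv Δ s i) ^ 2)
          (∑ i, (2 * (α * u i + v i) ^ (2-1) * (α * v i + w i))) t := by
        apply HasDerivAt.fun_sum
        intro i _
        exact (((hui i).const_mul α).add (hvi i)).pow 2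
      exact this.const_mul (1/2)
  rw [hVd.deriv]
  -- ODE pointwise
  have hw : ∀ i, w i = -(2*α) * v i - Hu i := by
    intro i
    have h0 := congrFun (hODE t ht) i
    simp only [Pi.add_apply, Pi.smul_apply, smul_eq_mul, Pi.zero_apply] at h0
    have : Hu i = H.mulVec (Δ t) i := by rw [hHu_def, hu_def]
    rw [this]; linarith
  -- symmetry : ∑ u i * Hv i = ∑ v i * Hu i
  have hsymm' : ∀ i j, H i j = H j i := by
    intro i j
    have := congrFun (congrFun hsymm j) i
    simpa [Matrix.transpose_apply] using this
  have hsymsum : ∑ i, u i * Hv i = ∑ i, v i * Hu i := by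
    simp only [hHu, hHv, Finset.mul_sum]
    rw [Finset.sum_comm]
    apply Finset.sum_congr rfl
    intro i _
    apply Finset.sum_congr rfl
    intro j _
    rw [hsymm' j i]; ring
  -- scalar abbreviations
  set a : ℝ := ∑ i, u i * Hu i with ha_def
  set b : ℝ := ∑ i, u i * v i with hb_def
  set c : ℝ := ∑ i, v i * Hu i with hc_def
  set su : ℝ := ∑ i, (u i)^2 with hsu_def
  set sv : ℝ := ∑ i, (v i)^2 with hsv_def
  have e1 : ∑ i, (v i * Hu i + u i * Hv i) = 2 * c := by
    rw [Finset.sum_add_distrib, hsymsum]; ring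
  have e2 : ∑ i, (2 * (α * u i + v i) ^ (2-1) * (α * v i + w i))
      = -2*α^2*b - 2*α*a - 2*α*sv - 2*c := by
    have : ∀ i ∈ Finset.univ, 2 * (α * u i + v i) ^ (2-1) * (α * v i + w i)
        = (-2*α^2) * (u i * v i) + (-2*α) * (u i * Hu i)
          + (-2*α) * ((v i)^2) + (-2) * (v i * Hu i) := by
      intro i _
      rw [hw i]; ring
    rw [Finset.sum_congr rfl this]
    simp only [Finset.sum_add_distrib, ← Finset.mul_sum]
    rw [ha_def, hb_def, hc_def, hsv_def]
    try ring
  rw [e1, e2]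
  -- rewrite RHS in the scalar abbreviations
  have e3 : Δ t ⬝ᵥ H.mulVec (Δ t) = a := by
    rw [ha_def]
    simp [dotProduct, hHu_def, hu_def]
  have e4 : ∑ i, (α * Δ t i + deriv Δ t i) ^ 2 = α^2 * su + 2*α*b + sv := by
    have : ∀ i ∈ Finset.univ, (α * Δ t i + deriv Δ t i) ^ 2
        = α^2 * (u i)^2 + 2*α*(u i * v i) + (v i)^2 := by
      intro i _
      rw [← hu_def, ← hv_def]; ring
    rw [Finset.sum_congr rfl this]
    simp only [Finset.sum_add_distrib, ← Finset.mul_sum]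
    try rw [hsu_def, hb_def, hsv_def]
    try ring
  rw [e3, e4]
  -- final inequality
  have e3' : u ⬝ᵥ H.mulVec u = a := by
    rw [ha_def]; simp [dotProduct, hHu_def]
  have hlowu : lam / 2 * su ≤ a := by
    have h := hlow u
    rwa [e3', ← hsu_def] at h
  have hsv0 : 0 ≤ sv := Finset.sum_nonneg fun i _ => sq_nonneg _
  have h5 : α * (lam/2 * su) ≤ α * a := mul_le_mul_of_nonneg_left hlowu hαpos.le
  have h6 : α^3 * su = α * (lam/2 * su) := by
    rw [← hα2]; ring
  nlinarith [h5, h6, mul_nonneg hαpos.le hsv0]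
end

section
/- Let n be a positive integer, let H be a symmetric positive semidefinite real n×n matrix, and let λ₀ > 0 satisfy vᵀHv ≥ (λ₀/2)‖v‖² for every v ∈ ℝⁿ. Set α := √(λ₀/2). Let Δ : ℝ → ℝⁿ be twice continuously differentiable and satisfy Δ''(t) + 2α·Δ'(t) + H·Δ(t) = 0 for all t ≥ 0. Then the Lyapunov function V(t) := (1/2)⟨Δ(t), H·Δ(t)⟩ + (1/2)‖α·Δ(t) + Δ'(t)‖² satisfies V(t) ≤ e^{−αt}·V(0) for all t ≥ 0. -/
open Real Matrix Set Filter

/-- Heavy Ball error dynamics: the Lyapunov function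
`V(t) = (1/2)⟨Δ(t), HΔ(t)⟩ + (1/2)‖αΔ(t) + Δ'(t)‖²` decays as `V(t) ≤ e^{-αt} V(0)`. -/
theorem heavy_ball_lyapunov_decay
    (n : ℕ) (hn : 0 < n) (H : Matrix (Fin n) (Fin n) ℝ)
    (hsymm : H.IsSymm) (hpsd : H.PosSemidef)
    (lam : ℝ) (hlam : 0 < lam)
    (hlow : ∀ v : Fin n → ℝ, lam / 2 * (∑ i, (v i) ^ 2) ≤ v ⬝ᵥ H.mulVec v)
    (α : ℝ) (hα : α = Real.sqrt (lam / 2))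
    (Δ : ℝ → (Fin n → ℝ)) (hΔ : ContDiff ℝ 2 Δ)
    (hODE : ∀ t : ℝ, 0 ≤ t →
      deriv (deriv Δ) t + (2 * α) • deriv Δ t + H.mulVec (Δ t) = 0) :
    ∀ t : ℝ, 0 ≤ t →
      (1 / 2) * (Δ t ⬝ᵥ H.mulVec (Δ t))
          + (1 / 2) * ∑ i, (α * Δ t i + deriv Δ t i) ^ 2
        ≤ Real.exp (-α * t) *
          ((1 / 2) * (Δ 0 ⬝ᵥ H.mulVec (Δ 0))
            + (1 / 2) * ∑ i, (α * Δ 0 i + deriv Δ 0 i) ^ 2) := by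
  have hα0 : 0 ≤ α := hα ▸ Real.sqrt_nonneg _
  have hα2 : α ^ 2 = lam / 2 := by
    rw [hα]; exact Real.sq_sqrt (by positivity)
  have hΔd : Differentiable ℝ Δ := hΔ.differentiable (by norm_num)
  have hDd : Differentiable ℝ (deriv Δ) := by
    have h2 : ContDiff ℝ ((1 : ℕ) + 1) Δ := by exact_mod_cast hΔ
    exact ((contDiff_succ_iff_deriv.mp h2).2.2).differentiable (by norm_num)
  have hcomp : ∀ (t : ℝ) (i : Fin n), HasDerivAt (fun s => Δ s i) (deriv Δ t i) t :=
    fun t i => hasDerivAt_pi.mp (hΔd t).hasDerivAt i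
  have hcomp' : ∀ (t : ℝ) (i : Fin n),
      HasDerivAt (fun s => deriv Δ s i) (deriv (deriv Δ) t i) t :=
    fun t i => hasDerivAt_pi.mp (hDd t).hasDerivAt i
  have hsym : ∀ u v : Fin n → ℝ, u ⬝ᵥ H.mulVec v = v ⬝ᵥ H.mulVec u := by
    intro u v
    rw [Matrix.dotProduct_mulVec, ← Matrix.mulVec_transpose, hsymm.eq, dotProduct_comm]
  set V : ℝ → ℝ := fun t =>
    (1 / 2) * (Δ t ⬝ᵥ H.mulVec (Δ t))
      + (1 / 2) * ∑ i, (α * Δ t i + deriv Δ t i) ^ 2 with hVdef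
  set Vd : ℝ → ℝ := fun t =>
    deriv Δ t ⬝ᵥ H.mulVec (Δ t)
      + ∑ i, (α * Δ t i + deriv Δ t i) * (α * deriv Δ t i + deriv (deriv Δ) t i) with hVddef
  have hV : ∀ t : ℝ, HasDerivAt V (Vd t) t := by
    intro t
    have h1 : HasDerivAt (fun s => ∑ i, Δ s i * ∑ j, H i j * Δ s j)
        (∑ i, (deriv Δ t i * ∑ j, H i j * Δ t j + Δ t i * ∑ j, H i j * deriv Δ t j)) t :=
      HasDerivAt.fun_sum fun i _ =>
        (hcomp t i).mul (HasDerivAt.fun_sum fun j _ => (hcomp t j).const_mul (H i j))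
    have h1' : HasDerivAt (fun s => Δ s ⬝ᵥ H.mulVec (Δ s))
        (deriv Δ t ⬝ᵥ H.mulVec (Δ t) + Δ t ⬝ᵥ H.mulVec (deriv Δ t)) t := by
      convert h1 using 1
      rfl
      simp [dotProduct, mulVec, Finset.sum_add_distrib]
    have h2 : HasDerivAt (fun s => ∑ i, (α * Δ s i + deriv Δ s i) ^ 2)
        (∑ i, (2 : ℕ) * (α * Δ t i + deriv Δ t i) ^ 1
            * (α * deriv Δ t i + deriv (deriv Δ) t i)) t :=
      HasDerivAt.fun_sum fun i _ =>
        (((hcomp t i).const_mul α).add (hcomp' t i)).pow 2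
    have h3 := ((h1'.const_mul ((1:ℝ)/2)).add (h2.const_mul ((1:ℝ)/2)))
    convert h3 using 1
    rfl
    rfl
    rfl
    rw [hVddef, hsym (Δ t) (deriv Δ t)]
    have he2 : ∀ i : Fin n, ((2:ℕ):ℝ) * (α * Δ t i + deriv Δ t i) ^ 1
        * (α * deriv Δ t i + deriv (deriv Δ) t i)
        = 2 * ((α * Δ t i + deriv Δ t i) * (α * deriv Δ t i + deriv (deriv Δ) t i)) := by
      intro i; push_cast; ring
    rw [Finset.sum_congr rfl fun i _ => he2 i, ← Finset.mul_sum]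
    ring
  have key : ∀ t : ℝ, 0 ≤ t → α * V t + Vd t ≤ 0 := by
    intro t ht
    have hc : ∀ i, deriv (deriv Δ) t i = -((2 * α) * deriv Δ t i) - (H.mulVec (Δ t)) i := by
      intro i
      have h := congrFun (hODE t ht) i
      simp only [Pi.add_apply, Pi.smul_apply, smul_eq_mul, Pi.zero_apply] at h
      linarith
    have hid : α * V t + Vd t
        = (α / 2) * ((α ^ 2) * (∑ i, (Δ t i) ^ 2) - Δ t ⬝ᵥ H.mulVec (Δ t))
          - (α / 2) * ∑ i, (deriv Δ t i) ^ 2 := by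
      rw [hVdef, hVddef]
      simp only [dotProduct, hc, Finset.mul_sum, ← Finset.sum_sub_distrib,
        ← Finset.sum_add_distrib]
      exact Finset.sum_congr rfl fun i _ => by ring
    rw [hid]
    have h1 : (α ^ 2) * (∑ i, (Δ t i) ^ 2) ≤ Δ t ⬝ᵥ H.mulVec (Δ t) := by
      rw [hα2]; exact hlow (Δ t)
    have h2 : (0:ℝ) ≤ ∑ i, (deriv Δ t i) ^ 2 :=
      Finset.sum_nonneg fun i _ => sq_nonneg _
    have hα2' : 0 ≤ α / 2 := by linarith
    nlinarith
  set g : ℝ → ℝ := fun t => Real.exp (α * t) * V t with hgdef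
  have hg : ∀ t : ℝ, HasDerivAt g (Real.exp (α * t) * (α * V t + Vd t)) t := by
    intro t
    have he : HasDerivAt (fun s => Real.exp (α * s)) (α * Real.exp (α * t)) t := by
      have := (Real.hasDerivAt_exp (α * t)).comp t ((hasDerivAt_id t).const_mul α)
      simpa [mul_comm, Function.comp_def] using this
    have := he.mul (hV t)
    convert this using 1
    rfl
    rfl
    rfl
    ring
  have hanti : AntitoneOn g (Ici (0:ℝ)) := by
    apply antitoneOn_of_deriv_nonpos (convex_Ici 0)
    · exact (Differentiable.continuous fun t => (hg t).differentiableAt).continuousOn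
    · exact (Differentiable.differentiableOn fun t => (hg t).differentiableAt)
    · intro x hx
      rw [interior_Ici] at hx
      rw [(hg x).deriv]
      exact mul_nonpos_of_nonneg_of_nonpos (Real.exp_pos _).le (key x hx.le)
  intro t ht
  have hgle : g t ≤ g 0 := hanti (self_mem_Ici) ht ht
  have hg0 : g 0 = V 0 := by simp [hgdef]
  show V t ≤ Real.exp (-α * t) * V 0
  have : Real.exp (α * t) * V t ≤ V 0 := hg0 ▸ hgle
  calc V t = Real.exp (-α * t) * (Real.exp (α * t) * V t) := by
        rw [← mul_assoc, ← Real.exp_add, show -α * t + α * t = 0 by ring,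
          Real.exp_zero, one_mul]
    _ ≤ Real.exp (-α * t) * V 0 :=
        mul_le_mul_of_nonneg_left this (Real.exp_pos _).le
end

section
/- Let n be a positive integer, let H be a symmetric positive semidefinite real n×n matrix, and let λ₀ > 0 satisfy vᵀHv ≥ (λ₀/2)‖v‖² for every v ∈ ℝⁿ. Set α := √(λ₀/2). Let Δ : ℝ → ℝⁿ be twice continuously differentiable with Δ'(0) = 0, satisfying Δ''(t) + 2α·Δ'(t) + H·Δ(t) = 0 for all t ≥ 0. Then for all t ≥ 0, the loss L(t) := (1/2)‖Δ(t)‖² satisfies L(t) ≤ (4/λ₀)·e^{−√(λ₀/2)·t}·L̂(0), where L̂(0) := (1/2)⟨Δ(0), H·Δ(0)⟩. -/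
open Real Matrix Set Filter

/-- Heavy Ball error dynamics: linear convergence of the MSE loss,
`L(t) ≤ (4/λ₀) e^{-√(λ₀/2) t} L̂(0)` where `L̂(0) = (1/2)⟨Δ(0), HΔ(0)⟩`. -/
theorem heavy_ball_loss_linear_convergence
    (n : ℕ) (hn : 0 < n) (H : Matrix (Fin n) (Fin n) ℝ)
    (hsymm : H.IsSymm) (hpsd : H.PosSemidef)
    (lam : ℝ) (hlam : 0 < lam)
    (hlow : ∀ v : Fin n → ℝ, lam / 2 * (∑ i, (v i) ^ 2) ≤ v ⬝ᵥ H.mulVec v)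
    (α : ℝ) (hα : α = Real.sqrt (lam / 2))
    (Δ : ℝ → (Fin n → ℝ)) (hΔ : ContDiff ℝ 2 Δ) (hΔ0 : deriv Δ 0 = 0)
    (hODE : ∀ t : ℝ, 0 ≤ t →
      deriv (deriv Δ) t + (2 * α) • deriv Δ t + H.mulVec (Δ t) = 0) :
    ∀ t : ℝ, 0 ≤ t →
      (1 / 2) * ∑ i, (Δ t i) ^ 2
        ≤ (4 / lam) * Real.exp (-Real.sqrt (lam / 2) * t) *
            ((1 / 2) * (Δ 0 ⬝ᵥ H.mulVec (Δ 0))) := by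
  have hα2 : α ^ 2 = lam / 2 := by
    rw [hα, Real.sq_sqrt (by positivity)]
  have hαpos : 0 < α := by
    rw [hα]; positivity
  -- differentiability
  have h2 : ContDiff ℝ ((1 : ℕ∞) + 1) Δ := by
    exact_mod_cast hΔ
  have hdiff : Differentiable ℝ Δ := hΔ.differentiable (by norm_num)
  have hdiff' : Differentiable ℝ (deriv Δ) := by
    have := (contDiff_succ_iff_deriv.mp h2).2.2
    exact this.differentiable (by norm_num)
  have hcomp : ∀ (t : ℝ) (i : Fin n),
      HasDerivAt (fun s => Δ s i) (deriv Δ t i) t :=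
    fun t i => hasDerivAt_pi.mp (hdiff t).hasDerivAt i
  have hcomp' : ∀ (t : ℝ) (i : Fin n),
      HasDerivAt (fun s => deriv Δ s i) (deriv (deriv Δ) t i) t :=
    fun t i => hasDerivAt_pi.mp (hdiff' t).hasDerivAt i
  -- Lyapunov function
  set V : ℝ → ℝ := fun t => (1/2) * (Δ t ⬝ᵥ H.mulVec (Δ t)) +
      (1/2) * ∑ i, (deriv Δ t i + α * Δ t i)^2 with hVdef
  set E : ℝ → ℝ := fun t => (deriv Δ t ⬝ᵥ H.mulVec (Δ t)) +
      ∑ i, (deriv (deriv Δ) t i + α * deriv Δ t i) * (deriv Δ t i + α * Δ t i) with hEdef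
  -- derivative of V
  have hV : ∀ t, HasDerivAt V (E t) t := by
    intro t
    have hW : HasDerivAt (fun s => Δ s ⬝ᵥ H.mulVec (Δ s))
        (2 * (deriv Δ t ⬝ᵥ H.mulVec (Δ t))) t := by
      have hterm : ∀ i : Fin n, HasDerivAt (fun s => Δ s i * ∑ j, H i j * Δ s j)
          (deriv Δ t i * ∑ j, H i j * Δ t j + Δ t i * ∑ j, H i j * deriv Δ t j) t := by
        intro i
        exact (hcomp t i).mul (HasDerivAt.fun_sum fun j _ => (hcomp t j).const_mul (H i j))
      have hsum : HasDerivAt (fun s => ∑ i, Δ s i * ∑ j, H i j * Δ s j)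
          (∑ i, (deriv Δ t i * ∑ j, H i j * Δ t j + Δ t i * ∑ j, H i j * deriv Δ t j)) t :=
        HasDerivAt.fun_sum fun i _ => hterm i
      have heq : (∑ i, (deriv Δ t i * ∑ j, H i j * Δ t j + Δ t i * ∑ j, H i j * deriv Δ t j))
          = 2 * (deriv Δ t ⬝ᵥ H.mulVec (Δ t)) := by
        rw [Finset.sum_add_distrib]
        have hswap : (∑ i, Δ t i * ∑ j, H i j * deriv Δ t j)
            = ∑ i, deriv Δ t i * ∑ j, H i j * Δ t j := by
          simp only [Finset.mul_sum]
          rw [Finset.sum_comm]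
          refine Finset.sum_congr rfl fun i _ => Finset.sum_congr rfl fun j _ => ?_
          have : H j i = H i j := by
            conv_lhs => rw [← hsymm]
            rfl
          rw [this]; ring
        rw [hswap]
        simp only [dotProduct, Matrix.mulVec, two_mul]
      have : (fun s => Δ s ⬝ᵥ H.mulVec (Δ s)) = fun s => ∑ i, Δ s i * ∑ j, H i j * Δ s j := by
        funext s
        simp [dotProduct, Matrix.mulVec]
      rw [this, ← heq]
      exact hsum
    have hU : HasDerivAt (fun s => ∑ i, (deriv Δ s i + α * Δ s i)^2)
        (∑ i, 2 * (deriv (deriv Δ) t i + α * deriv Δ t i) * (deriv Δ t i + α * Δ t i)) t := by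
      refine HasDerivAt.fun_sum fun i _ => ?_
      have h := ((hcomp' t i).add ((hcomp t i).const_mul α)).pow 2
      simpa [mul_comm, mul_assoc, mul_left_comm] using
        (show HasDerivAt (fun s => (deriv Δ s i + α * Δ s i) ^ 2) _ t from h)
    have := (hW.const_mul (1/2 : ℝ)).add (hU.const_mul (1/2 : ℝ))
    refine this.congr_deriv ?_
    rw [hEdef]
    simp only [Finset.mul_sum]
    congr 1
    · ring
    · exact Finset.sum_congr rfl fun i _ => by ring
  -- key differential inequality
  have hkey : ∀ t : ℝ, 0 ≤ t → E t + α * V t ≤ 0 := by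
    intro t ht
    have hode := hODE t ht
    have hsub : ∀ i : Fin n, deriv (deriv Δ) t i
        = -(2*α) * deriv Δ t i - H.mulVec (Δ t) i := by
      intro i
      have := congrFun hode i
      simp only [Pi.add_apply, Pi.smul_apply, smul_eq_mul, Pi.zero_apply] at this
      linarith
    have hEV : E t + α * V t = ∑ i, (-(α/2)*(deriv Δ t i)^2
        - (α/2)*(Δ t i * H.mulVec (Δ t) i) + (α^3/2)*(Δ t i)^2) := by
      have hsum : E t + α * V t = ∑ i, (deriv Δ t i * H.mulVec (Δ t) i
          + (deriv (deriv Δ) t i + α * deriv Δ t i) * (deriv Δ t i + α * Δ t i)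
          + α * ((1/2) * (Δ t i * H.mulVec (Δ t) i)
            + (1/2) * (deriv Δ t i + α * Δ t i)^2)) := by
        rw [hEdef, hVdef]
        simp only [dotProduct, Finset.sum_add_distrib, Finset.mul_sum, mul_add]
      rw [hsum]
      refine Finset.sum_congr rfl fun i _ => ?_
      rw [hsub i]; ring
    rw [hEV]
    have hl : lam / 2 * ∑ i, (Δ t i)^2 ≤ ∑ i, Δ t i * H.mulVec (Δ t) i := by
      simpa [dotProduct] using hlow (Δ t)
    have hb : 0 ≤ ∑ i, (deriv Δ t i)^2 := Finset.sum_nonneg fun i _ => sq_nonneg _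
    have hsplit : ∑ i, (-(α/2)*(deriv Δ t i)^2
        - (α/2)*(Δ t i * H.mulVec (Δ t) i) + (α^3/2)*(Δ t i)^2)
        = -(α/2) * ∑ i, (deriv Δ t i)^2
          - (α/2) * ∑ i, (Δ t i * H.mulVec (Δ t) i)
          + (α^3/2) * ∑ i, (Δ t i)^2 := by
      simp only [Finset.sum_add_distrib, Finset.sum_sub_distrib, Finset.mul_sum]
    rw [hsplit]
    have hcube : α^3/2 = (α/2) * (lam/2) := by
      have : α^3 = α * (lam/2) := by rw [← hα2]; ring
      rw [this]; ring
    have h3 : (α/2) * (lam/2 * ∑ i, (Δ t i)^2) ≤ (α/2) * ∑ i, Δ t i * H.mulVec (Δ t) i :=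
      mul_le_mul_of_nonneg_left hl (by positivity)
    have h5 : (α^3/2) * ∑ i, (Δ t i)^2 = (α/2) * (lam/2 * ∑ i, (Δ t i)^2) := by
      rw [hcube]; ring
    linarith [mul_nonneg (by positivity : (0:ℝ) ≤ α/2) hb]
  -- Gronwall via monotonicity of g t = V t * exp (α t)
  set g : ℝ → ℝ := fun t => V t * Real.exp (α * t) with hgdef
  have hg : ∀ t, HasDerivAt g ((E t + α * V t) * Real.exp (α * t)) t := by
    intro t
    have hexp : HasDerivAt (fun s => Real.exp (α * s)) (Real.exp (α * t) * α) t := by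
      simpa using ((hasDerivAt_id t).const_mul α).exp
    have := (hV t).mul hexp
    refine this.congr_deriv ?_
    ring
  have hanti : AntitoneOn g (Ici (0:ℝ)) := by
    apply antitoneOn_of_deriv_nonpos (convex_Ici 0)
    · exact fun t _ => ((hg t).differentiableAt.continuousAt).continuousWithinAt
    · intro t _
      exact (hg t).differentiableAt.differentiableWithinAt
    · intro t ht
      rw [interior_Ici] at ht
      rw [(hg t).deriv]
      exact mul_nonpos_of_nonpos_of_nonneg (hkey t (le_of_lt ht)) (Real.exp_pos _).le
  intro t ht
  have hgle : g t ≤ g 0 := hanti (self_mem_Ici) ht ht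
  have hVle : V t ≤ V 0 * Real.exp (-(α * t)) := by
    rw [hgdef] at hgle
    simp only [mul_zero, Real.exp_zero, mul_one] at hgle
    have := mul_le_mul_of_nonneg_right hgle (Real.exp_pos (-(α * t))).le
    rwa [mul_assoc, ← Real.exp_add, add_neg_cancel, Real.exp_zero, mul_one] at this
  have hV0 : V 0 ≤ Δ 0 ⬝ᵥ H.mulVec (Δ 0) := by
    rw [hVdef]
    simp only [hΔ0, Pi.zero_apply, zero_add]
    have hl0 : lam / 2 * ∑ i, (Δ 0 i)^2 ≤ Δ 0 ⬝ᵥ H.mulVec (Δ 0) := hlow (Δ 0)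
    have : (1/2) * ∑ i, (α * Δ 0 i)^2 = (1/2) * (lam/2 * ∑ i, (Δ 0 i)^2) := by
      simp only [mul_pow, ← Finset.mul_sum, hα2]
    rw [this]
    linarith
  -- conclude
  have hVt_lb : Δ t ⬝ᵥ H.mulVec (Δ t) ≤ 2 * V t := by
    rw [hVdef]
    have : (0:ℝ) ≤ ∑ i, (deriv Δ t i + α * Δ t i)^2 :=
      Finset.sum_nonneg fun i _ => sq_nonneg _
    linarith
  have hlt : lam / 2 * ∑ i, (Δ t i)^2 ≤ Δ t ⬝ᵥ H.mulVec (Δ t) := hlow (Δ t)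
  have hexppos : (0:ℝ) < Real.exp (-(α * t)) := Real.exp_pos _
  have hchain : lam * ((1/2) * ∑ i, (Δ t i)^2)
      ≤ 2 * (Real.exp (-(α * t)) * (Δ 0 ⬝ᵥ H.mulVec (Δ 0))) := by
    have h1 : V 0 * Real.exp (-(α * t)) ≤ (Δ 0 ⬝ᵥ H.mulVec (Δ 0)) * Real.exp (-(α * t)) :=
      mul_le_mul_of_nonneg_right hV0 hexppos.le
    nlinarith
  have hgoal : (1/2) * ∑ i, (Δ t i)^2
      ≤ 2 * (Real.exp (-(α * t)) * (Δ 0 ⬝ᵥ H.mulVec (Δ 0))) / lam := by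
    rw [le_div_iff₀ hlam]
    nlinarith
  calc (1/2) * ∑ i, (Δ t i)^2
      ≤ 2 * (Real.exp (-(α * t)) * (Δ 0 ⬝ᵥ H.mulVec (Δ 0))) / lam := hgoal
    _ = (4 / lam) * Real.exp (-Real.sqrt (lam / 2) * t)
        * ((1 / 2) * (Δ 0 ⬝ᵥ H.mulVec (Δ 0))) := by
        rw [← hα, show -α * t = -(α * t) by ring]
        field_simp
        ring
end

section
/- Let p be a positive integer, α > 0, K ≥ 0. Let w : ℝ → ℝᵖ be twice continuously differentiable with w'(0) = 0, and let g : ℝ → ℝᵖ be continuous with ‖g(t)‖ ≤ K·e^{−(α/2)·t} for all t ≥ 0. Suppose w''(t) + 2α·w'(t) + g(t) = 0 for all t ≥ 0. Then ‖w'(t)‖ ≤ (2K/(3α))·e^{−(α/2)·t} for all t ≥ 0. -/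
open Real Set Filter

/-- Heavy Ball weight dynamics with exponentially decaying forcing term:
the velocity decays as `‖w'(t)‖ ≤ (2K/(3α)) e^{-(α/2)t}`. -/
theorem heavy_ball_velocity_decay
    (p : ℕ) (hp : 0 < p) (α K : ℝ) (hα : 0 < α) (hK : 0 ≤ K)
    (w g : ℝ → (Fin p → ℝ)) (hw : ContDiff ℝ 2 w) (hw0 : deriv w 0 = 0)
    (hg : Continuous g)
    (hgb : ∀ t : ℝ, 0 ≤ t →
      Real.sqrt (∑ i, (g t i) ^ 2) ≤ K * Real.exp (-(α / 2) * t))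
    (hODE : ∀ t : ℝ, 0 ≤ t →
      deriv (deriv w) t + (2 * α) • deriv w t + g t = 0) :
    ∀ t : ℝ, 0 ≤ t →
      Real.sqrt (∑ i, (deriv w t i) ^ 2)
        ≤ (2 * K / (3 * α)) * Real.exp (-(α / 2) * t) := by
  intro t ht
  -- transport to Euclidean space
  set e : (Fin p → ℝ) ≃L[ℝ] EuclideanSpace ℝ (Fin p) :=
    (PiLp.continuousLinearEquiv 2 ℝ fun _ : Fin p => ℝ).symm with he
  -- differentiability facts
  have h2 : (2 : WithTop ℕ∞) = 1 + 1 := by norm_num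
  have hwd : Differentiable ℝ w := hw.differentiable (by norm_num)
  have hdw : ContDiff ℝ 1 (deriv w) := by
    rw [h2, contDiff_succ_iff_deriv] at hw
    exact hw.2.2
  have hdwd : Differentiable ℝ (deriv w) := hdw.differentiable (by norm_num)
  -- v is the velocity in Euclidean space
  set v : ℝ → EuclideanSpace ℝ (Fin p) := fun s => e (deriv w s) with hv
  have hvd : ∀ s, HasDerivAt v (e (deriv (deriv w) s)) s := fun s =>
    e.toContinuousLinearMap.hasFDerivAt.comp_hasDerivAt s (hdwd s).hasDerivAt
  have hnv : ∀ x : Fin p → ℝ, ‖e x‖ = Real.sqrt (∑ i, (x i) ^ 2) := by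
    intro x
    rw [EuclideanSpace.norm_eq]
    congr 1
    refine Finset.sum_congr rfl fun i _ => ?_
    show ‖x i‖ ^ 2 = _
    rw [Real.norm_eq_abs, sq_abs]
  -- the rescaled velocity
  set φ : ℝ → EuclideanSpace ℝ (Fin p) :=
    fun s => Real.exp (2 * α * s) • v s with hφ
  have hφd : ∀ s : ℝ, 0 ≤ s → HasDerivAt φ (-(Real.exp (2 * α * s) • e (g s))) s := by
    intro s hs
    have hc : HasDerivAt (fun s : ℝ => Real.exp (2 * α * s))
        (Real.exp (2 * α * s) * (2 * α)) s := by
      have := (((hasDerivAt_id s).const_mul (2 * α)).exp)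
      simpa using this
    have := hc.smul (hvd s)
    have hode : deriv (deriv w) s = -((2 * α) • deriv w s) - g s := by
      have := hODE s hs
      linear_combination (norm := module) this
    rw [hode] at this
    refine this.congr_deriv ?_
    rw [map_sub, map_neg, map_smul]
    module
  have hφ0 : φ 0 = 0 := by simp [hφ, hv, hw0]
  -- boundary function
  set B : ℝ → ℝ := fun s => (2 * K / (3 * α)) * (Real.exp (3 * α / 2 * s) - 1) with hB
  have hB' : ∀ s : ℝ, HasDerivAt B (K * Real.exp (3 * α / 2 * s)) s := by
    intro s
    have hc : HasDerivAt (fun s : ℝ => Real.exp (3 * α / 2 * s))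
        (Real.exp (3 * α / 2 * s) * (3 * α / 2)) s := by
      have := (((hasDerivAt_id s).const_mul (3 * α / 2)).exp)
      simpa using this
    have := ((hc.sub_const 1).const_mul (2 * K / (3 * α)))
    refine this.congr_deriv ?_
    field_simp
  have key : ‖φ t‖ ≤ B t := by
    refine image_norm_le_of_norm_deriv_right_le_deriv_boundary
      (f := φ) (f' := fun s => -(Real.exp (2 * α * s) • e (g s)))
      (a := 0) (b := t) ?_ ?_ ?_ hB' ?_ (Set.right_mem_Icc.mpr ht)
    · exact fun s hs => ((hφd s hs.1).continuousAt).continuousWithinAt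
    · exact fun s hs => (hφd s hs.1).hasDerivWithinAt
    · simp [hφ0, hB]
    · intro s hs
      rw [norm_neg, norm_smul, Real.norm_eq_abs, abs_of_pos (Real.exp_pos _), hnv]
      calc Real.exp (2 * α * s) * Real.sqrt (∑ i, (g s i) ^ 2)
          ≤ Real.exp (2 * α * s) * (K * Real.exp (-(α / 2) * s)) := by
            exact mul_le_mul_of_nonneg_left (hgb s hs.1) (Real.exp_pos _).le
        _ = K * Real.exp (3 * α / 2 * s) := by
            rw [show Real.exp (2 * α * s) * (K * Real.exp (-(α / 2) * s))
              = K * (Real.exp (2 * α * s) * Real.exp (-(α / 2) * s)) by ring,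
              ← Real.exp_add]
            ring_nf
  -- conclude
  have hEq : Real.sqrt (∑ i, (deriv w t i) ^ 2) = Real.exp (-(2 * α * t)) * ‖φ t‖ := by
    have hφn : ‖φ t‖ = Real.exp (2 * α * t) * Real.sqrt (∑ i, (deriv w t i) ^ 2) := by
      simp only [hφ, hv, norm_smul, Real.norm_eq_abs, abs_of_pos (Real.exp_pos _), hnv]
    rw [hφn, ← mul_assoc, ← Real.exp_add]
    simp
  rw [hEq]
  calc Real.exp (-(2 * α * t)) * ‖φ t‖ ≤ Real.exp (-(2 * α * t)) * B t :=
        mul_le_mul_of_nonneg_left key (Real.exp_pos _).le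
    _ ≤ Real.exp (-(2 * α * t)) * ((2 * K / (3 * α)) * Real.exp (3 * α / 2 * t)) := by
        refine mul_le_mul_of_nonneg_left ?_ (Real.exp_pos _).le
        have h1 : (0:ℝ) ≤ 2 * K / (3 * α) := by positivity
        have h2 : Real.exp (3 * α / 2 * t) - 1 ≤ Real.exp (3 * α / 2 * t) := by linarith
        exact mul_le_mul_of_nonneg_left h2 h1
    _ = (2 * K / (3 * α)) * Real.exp (-(α / 2) * t) := by
        rw [← mul_assoc, mul_comm (Real.exp _), mul_assoc, ← Real.exp_add]
        ring_nf
end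

section
/- Let p be a positive integer, α > 0, K ≥ 0. Let w : ℝ → ℝᵖ be twice continuously differentiable with w'(0) = 0, and let g : ℝ → ℝᵖ be continuous with ‖g(t)‖ ≤ K·e^{−(α/2)·t} for all t ≥ 0. Suppose w''(t) + 2α·w'(t) + g(t) = 0 for all t ≥ 0. Then ‖w(t) − w(0)‖ ≤ 4K/(3α²) for all t ≥ 0. -/
open Real Set Filter


lemma exp_integral_aux (c t : ℝ) (hc : c ≠ 0) :
    ∫ s in (0:ℝ)..t, Real.exp (c*s) = (Real.exp (c*t) - 1)/c := by
  have : ∀ x ∈ uIcc (0:ℝ) t, HasDerivAt (fun s => Real.exp (c*s)/c) (Real.exp (c*x)) x := by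
    intro x _
    have h := (((hasDerivAt_id x).const_mul c).exp).div_const c
    simpa [mul_div_assoc, mul_comm, mul_div_cancel_left₀ _ hc] using h
  rw [intervalIntegral.integral_eq_sub_of_hasDerivAt this
    ((Real.continuous_exp.comp (continuous_const.mul continuous_id)).intervalIntegrable 0 t)]
  simp [sub_div]

/-- Heavy Ball weight dynamics with exponentially decaying forcing term:
lazy training, `‖w(t) - w(0)‖ ≤ 4K/(3α²)`. -/
theorem heavy_ball_lazy_training
    (p : ℕ) (hp : 0 < p) (α K : ℝ) (hα : 0 < α) (hK : 0 ≤ K)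
    (w g : ℝ → (Fin p → ℝ)) (hw : ContDiff ℝ 2 w) (hw0 : deriv w 0 = 0)
    (hg : Continuous g)
    (hgb : ∀ t : ℝ, 0 ≤ t →
      Real.sqrt (∑ i, (g t i) ^ 2) ≤ K * Real.exp (-(α / 2) * t))
    (hODE : ∀ t : ℝ, 0 ≤ t →
      deriv (deriv w) t + (2 * α) • deriv w t + g t = 0) :
    ∀ t : ℝ, 0 ≤ t →
      Real.sqrt (∑ i, (w t i - w 0 i) ^ 2) ≤ 4 * K / (3 * α ^ 2) := by
  have hα2 : (0:ℝ) < 2*α := by linarith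
  set E := EuclideanSpace ℝ (Fin p) with hE
  let L : (Fin p → ℝ) ≃L[ℝ] E := (EuclideanSpace.equiv (Fin p) ℝ).symm
  set W : ℝ → E := fun t => L (w t) with hWdef
  set G : ℝ → E := fun t => L (g t) with hGdef
  set V : ℝ → E := fun t => L (deriv w t) with hVdef
  have hLnorm : ∀ x : Fin p → ℝ, ‖L x‖ = Real.sqrt (∑ i, (x i)^2) := by
    intro x
    rw [EuclideanSpace.norm_eq]
    congr 1
    apply Finset.sum_congr rfl
    intro i _
    rw [Real.norm_eq_abs, sq_abs]
    rfl
  -- regularity of w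
  have hw2 : ContDiff ℝ (1+1) w := by norm_num at hw ⊢; exact hw
  have hwd : Differentiable ℝ w := hw.differentiable (by norm_num)
  have hdw1 : ContDiff ℝ 1 (deriv w) := (contDiff_succ_iff_deriv.mp hw2).2.2
  have hdwd : Differentiable ℝ (deriv w) := hdw1.differentiable one_ne_zero
  have hdwc : Continuous (deriv w) := hdw1.continuous
  have hGc : Continuous G := (L.continuous).comp hg
  have hVc : Continuous V := (L.continuous).comp hdwc
  have hV0 : V 0 = 0 := by simp [hVdef, hw0]
  -- derivative of V
  have hVderiv : ∀ x : ℝ, HasDerivAt V (L (deriv (deriv w) x)) x := by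
    intro x
    exact (L : (Fin p → ℝ) →L[ℝ] E).hasFDerivAt.comp_hasDerivAt x ((hdwd x).hasDerivAt)
  have hODE' : ∀ x : ℝ, 0 ≤ x → L (deriv (deriv w) x) = -((2*α) • V x) - G x := by
    intro x hx
    have h : deriv (deriv w) x = -((2*α) • deriv w x) - g x := by
      have h0 := hODE x hx
      have : deriv (deriv w) x + ((2*α) • deriv w x + g x) = 0 := by
        rw [← add_assoc]; exact h0
      rw [add_eq_zero_iff_eq_neg] at this
      rw [this]; abel
    rw [h]
    simp [hVdef, hGdef]
  -- the primitive of the forcing term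
  have hInt : Continuous fun s : ℝ => Real.exp (2*α*s) • G s :=
    (Real.continuous_exp.comp (continuous_const.mul continuous_id)).smul hGc
  set F : ℝ → E := fun t => ∫ s in (0:ℝ)..t, Real.exp (2*α*s) • G s with hFdef
  have hFderiv : ∀ x : ℝ, HasDerivAt F (Real.exp (2*α*x) • G x) x := by
    intro x
    exact intervalIntegral.integral_hasDerivAt_right (hInt.intervalIntegrable 0 x)
      (hInt.stronglyMeasurableAtFilter _ _) hInt.continuousAt
  have hFc : Continuous F := by
    have : Differentiable ℝ F := fun x => (hFderiv x).differentiableAt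
    exact this.continuous
  -- the conserved quantity
  set u : ℝ → E := fun t => Real.exp (2*α*t) • V t + F t with hudef
  have huderiv : ∀ x : ℝ, 0 ≤ x → HasDerivAt u 0 x := by
    intro x hx
    have hc : HasDerivAt (fun t => Real.exp (2*α*t)) (Real.exp (2*α*x) * (2*α)) x := by
      simpa using ((hasDerivAt_id x).const_mul (2*α)).exp
    have h1 : HasDerivAt (fun t => Real.exp (2*α*t) • V t)
        (Real.exp (2*α*x) • (L (deriv (deriv w) x)) + (Real.exp (2*α*x) * (2*α)) • V x) x :=
      HasDerivAt.smul hc (hVderiv x)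
    have h := h1.add (hFderiv x)
    rw [hODE' x hx] at h
    refine h.congr_deriv ?_
    rw [smul_sub, smul_neg, smul_smul]
    module
  have hcontu : Continuous u :=
    ((Real.continuous_exp.comp (continuous_const.mul continuous_id)).smul hVc).add hFc
  have hu0 : u 0 = 0 := by simp [hudef, hV0, hFdef]
  have hueq : ∀ t : ℝ, 0 ≤ t → Real.exp (2*α*t) • V t = - F t := by
    intro t ht
    have h := constant_of_has_deriv_right_zero (f := u) (a := 0) (b := t)
      hcontu.continuousOn
      (fun x hx => ((huderiv x hx.1).hasDerivWithinAt)) t (by constructor <;> simp [ht])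
    rw [hu0] at h
    exact eq_neg_of_add_eq_zero_left h
  -- the norm bound on G
  have hnormG : ∀ s : ℝ, 0 ≤ s → ‖G s‖ ≤ K * Real.exp (-(α/2)*s) := by
    intro s hs
    rw [hGdef]
    rw [hLnorm (g s)]
    exact hgb s hs
  -- bound on ‖V t‖
  have hVbound : ∀ t : ℝ, 0 ≤ t → ‖V t‖ ≤ (2*K/(3*α)) * Real.exp (-(α/2)*t) := by
    intro t ht
    have h32 : (0:ℝ) < 3*α/2 := by linarith
    have hFb : ‖F t‖ ≤ (2*K/(3*α)) * Real.exp ((3*α/2)*t) := by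
      calc ‖F t‖ ≤ ∫ s in (0:ℝ)..t, ‖Real.exp (2*α*s) • G s‖ :=
            intervalIntegral.norm_integral_le_integral_norm ht
        _ ≤ ∫ s in (0:ℝ)..t, K * Real.exp ((3*α/2)*s) := by
            apply intervalIntegral.integral_mono_on ht
              (hInt.norm.intervalIntegrable 0 t)
              ((continuous_const.mul (Real.continuous_exp.comp
                (continuous_const.mul continuous_id))).intervalIntegrable 0 t)
            intro s hs
            rw [norm_smul, Real.norm_eq_abs, abs_of_pos (Real.exp_pos _)]
            calc Real.exp (2*α*s) * ‖G s‖ ≤ Real.exp (2*α*s) * (K * Real.exp (-(α/2)*s)) :=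
                  mul_le_mul_of_nonneg_left (hnormG s hs.1) (Real.exp_pos _).le
              _ = K * Real.exp ((3*α/2)*s) := by
                  rw [mul_comm (Real.exp (2*α*s)), mul_assoc, ← Real.exp_add]
                  ring_nf
        _ = K * ((Real.exp ((3*α/2)*t) - 1)/(3*α/2)) := by
            rw [intervalIntegral.integral_const_mul, exp_integral_aux _ _ h32.ne']
        _ ≤ (2*K/(3*α)) * Real.exp ((3*α/2)*t) := by
            rw [div_eq_mul_inv, ← mul_assoc]
            have h1 : K * (Real.exp ((3*α/2)*t) - 1) ≤ K * Real.exp ((3*α/2)*t) := by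
              apply mul_le_mul_of_nonneg_left _ hK
              linarith [Real.exp_pos ((3*α/2)*t)]
            have h2 : (3*α/2)⁻¹ = 2/(3*α) := by field_simp
            rw [h2]
            calc K * (Real.exp ((3*α/2)*t) - 1) * (2/(3*α)) 
                ≤ K * Real.exp ((3*α/2)*t) * (2/(3*α)) := by
                  apply mul_le_mul_of_nonneg_right h1
                  positivity
              _ = 2*K/(3*α) * Real.exp ((3*α/2)*t) := by ring
    have hkey : Real.exp (2*α*t) * ‖V t‖ ≤ (2*K/(3*α)) * Real.exp ((3*α/2)*t) := by
      have : ‖Real.exp (2*α*t) • V t‖ = Real.exp (2*α*t) * ‖V t‖ := by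
        rw [norm_smul, Real.norm_eq_abs, abs_of_pos (Real.exp_pos _)]
      rw [← this, hueq t ht, norm_neg]
      exact hFb
    have he : Real.exp (-(α/2)*t) * Real.exp (2*α*t) = Real.exp ((3*α/2)*t) := by
      rw [← Real.exp_add]; ring_nf
    have hmul : ‖V t‖ * Real.exp (2*α*t) ≤ ((2*K/(3*α)) * Real.exp (-(α/2)*t)) * Real.exp (2*α*t) := by
      calc ‖V t‖ * Real.exp (2*α*t) = Real.exp (2*α*t) * ‖V t‖ := by ring
        _ ≤ 2*K/(3*α) * Real.exp ((3*α/2)*t) := hkey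
        _ = ((2*K/(3*α)) * Real.exp (-(α/2)*t)) * Real.exp (2*α*t) := by rw [← he]; ring
    exact le_of_mul_le_mul_right hmul (Real.exp_pos _)
  -- conclude
  intro t ht
  have hWderiv : ∀ x ∈ uIcc (0:ℝ) t, HasDerivAt W (V x) x := fun x _ =>
    (L : (Fin p → ℝ) →L[ℝ] E).hasFDerivAt.comp_hasDerivAt x (hwd x).hasDerivAt
  have hWt : W t - W 0 = ∫ s in (0:ℝ)..t, V s :=
    (intervalIntegral.integral_eq_sub_of_hasDerivAt hWderiv (hVc.intervalIntegrable 0 t)).symm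
  have hfinal : ‖W t - W 0‖ ≤ 4*K/(3*α^2) := by
    rw [hWt]
    have hαh : -(α/2) ≠ 0 := (by linarith : -(α/2) < 0).ne
    calc ‖∫ s in (0:ℝ)..t, V s‖ ≤ ∫ s in (0:ℝ)..t, ‖V s‖ :=
          intervalIntegral.norm_integral_le_integral_norm ht
      _ ≤ ∫ s in (0:ℝ)..t, (2*K/(3*α)) * Real.exp (-(α/2)*s) := by
          apply intervalIntegral.integral_mono_on ht
            (hVc.norm.intervalIntegrable 0 t)
            ((continuous_const.mul (Real.continuous_exp.comp
              (continuous_const.mul continuous_id))).intervalIntegrable 0 t)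
          exact fun s hs => hVbound s hs.1
      _ = (2*K/(3*α)) * ((Real.exp (-(α/2)*t) - 1)/(-(α/2))) := by
          rw [intervalIntegral.integral_const_mul, exp_integral_aux _ _ hαh]
      _ ≤ (2*K/(3*α)) * (2/α) := by
          apply mul_le_mul_of_nonneg_left _ (by positivity)
          rw [div_le_iff_of_neg (by linarith : -(α/2) < 0)]
          have h1 : 2/α * (-(α/2)) = -1 := by
            field_simp
          rw [h1]
          linarith [Real.exp_pos (-(α/2)*t)]
      _ = 4*K/(3*α^2) := by
          field_simp
          ring
  have hnorm : Real.sqrt (∑ i, (w t i - w 0 i)^2) = ‖W t - W 0‖ := by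
    have : W t - W 0 = L (w t - w 0) := by rw [map_sub]
    rw [this, hLnorm]
    simp [Pi.sub_apply]
  rw [hnorm]
  exact hfinal
end

section
/- For every γ > 3 and every real a with 2 ≤ a ≤ 2γ/3, there exists a constant C > 0, depending only on a and γ, with the following property: for every positive integer n, every symmetric real n×n matrix H, every μ > 0 with vᵀHv ≥ μ‖v‖² for all v ∈ ℝⁿ, and every function Δ : [0,∞) → ℝⁿ that is continuous on [0,∞), twice continuously differentiable on (0,∞), satisfies Δ'(t) → 0 as t → 0⁺, and satisfies the Nesterov error dynamics Δ''(t) + (γ/t)·Δ'(t) + H·Δ(t) = 0 for all t > 0, one has (1/2)⟨Δ(t), H·Δ(t)⟩ ≤ C·‖Δ(0)‖² / (μ^{a/2−1}·t^{a}) for all t > 0. -/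
open Real Matrix Set Filter

lemma nest_hasDerivAt_dot {n : ℕ} {f g : ℝ → Fin n → ℝ} {f' g' : Fin n → ℝ} {t : ℝ}
    (hf : HasDerivAt f f' t) (hg : HasDerivAt g g' t) :
    HasDerivAt (fun s => f s ⬝ᵥ g s) (f' ⬝ᵥ g t + f t ⬝ᵥ g') t := by
  simp only [dotProduct]
  have h : ∀ i : Fin n, HasDerivAt (fun s => f s i * g s i)
      (f' i * g t i + f t i * g' i) t :=
    fun i => ((hasDerivAt_pi.mp hf) i).mul ((hasDerivAt_pi.mp hg) i)
  simpa [Finset.sum_add_distrib] using HasDerivAt.fun_sum (fun i _ => h i)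

lemma nest_hasDerivAt_mulVec {n : ℕ} (H : Matrix (Fin n) (Fin n) ℝ)
    {f : ℝ → Fin n → ℝ} {f' : Fin n → ℝ} {t : ℝ} (hf : HasDerivAt f f' t) :
    HasDerivAt (fun s => H.mulVec (f s)) (H.mulVec f') t := by
  rw [hasDerivAt_pi] at hf ⊢
  intro i
  simp only [Matrix.mulVec, dotProduct]
  exact HasDerivAt.fun_sum fun j _ => (hf j).const_mul (H i j)

lemma nest_dot_symm {n : ℕ} {H : Matrix (Fin n) (Fin n) ℝ} (hH : H.IsSymm)
    (x y : Fin n → ℝ) : x ⬝ᵥ H.mulVec y = y ⬝ᵥ H.mulVec x := by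
  simp only [dotProduct, Matrix.mulVec, Finset.mul_sum]
  rw [Finset.sum_comm]
  refine Finset.sum_congr rfl fun j _ => Finset.sum_congr rfl fun i _ => ?_
  rw [← hH.apply i j]; ring

lemma nest_dot_self_nonneg {n : ℕ} (v : Fin n → ℝ) : 0 ≤ v ⬝ᵥ v :=
  Finset.sum_nonneg fun i _ => mul_self_nonneg _

noncomputable def nestE (γ p : ℝ) {n : ℕ} (H : Matrix (Fin n) (Fin n) ℝ)
    (Δ : ℝ → Fin n → ℝ) (t : ℝ) : ℝ :=
  t ^ p * (Δ t ⬝ᵥ H.mulVec (Δ t)) / 2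
  + t ^ (p-2) * ((((p/2) • Δ t + t • deriv Δ t) ⬝ᵥ ((p/2) • Δ t + t • deriv Δ t))) / 2
  + (p/2*(γ+1-3*p/2)) * (t ^ (p-2) * (Δ t ⬝ᵥ Δ t)) / 2

noncomputable def nestF (γ p μ : ℝ) {n : ℕ} (H : Matrix (Fin n) (Fin n) ℝ)
    (Δ : ℝ → Fin n → ℝ) (t : ℝ) : ℝ :=
  nestE γ p H Δ t * exp ((p-2)*(p^2/4 + p/2*(γ+1-3*p/2))/2 / μ * (t^2)⁻¹)

lemma nestF_deriv_nonpos (γ p : ℝ) (hγ : 3 < γ) (hp : 2 ≤ p) (hp3 : 3*p ≤ 2*γ)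
    {n : ℕ} (H : Matrix (Fin n) (Fin n) ℝ) (hH : H.IsSymm)
    (μ : ℝ) (hμ : 0 < μ)
    (hstr : ∀ v : Fin n → ℝ, μ * (∑ i, (v i) ^ 2) ≤ v ⬝ᵥ H.mulVec v)
    (Δ : ℝ → Fin n → ℝ)
    (hd1 : ∀ t, 0 < t → HasDerivAt Δ (deriv Δ t) t)
    (hd2 : ∀ t, 0 < t → HasDerivAt (deriv Δ) (deriv (deriv Δ) t) t)
    (hODE : ∀ t : ℝ, 0 < t →
      deriv (deriv Δ) t + (γ / t) • deriv Δ t + H.mulVec (Δ t) = 0)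
    (t : ℝ) (ht : 0 < t) :
    ∃ d, HasDerivAt (nestF γ p μ H Δ) d t ∧ d ≤ 0 := by
  classical
  set β : ℝ := p/2*(γ+1-3*p/2) with hβ
  set al : ℝ := (p-2)*(p^2/4 + β)/2 with hal
  set X : Fin n → ℝ := Δ t with hX
  set V : Fin n → ℝ := deriv Δ t with hV
  set A : Fin n → ℝ := deriv (deriv Δ) t with hA
  have hAeq : A = -((γ/t) • V) - H.mulVec X := by
    have h := hODE t ht
    have : A + ((γ/t) • V + H.mulVec X) = 0 := by rw [add_assoc] at h; exact h
    rw [add_eq_zero_iff_eq_neg] at this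
    rw [this]; abel
  -- vector derivatives
  have hX' : HasDerivAt Δ V t := hd1 t ht
  have hV' : HasDerivAt (deriv Δ) A t := hd2 t ht
  have hHX' : HasDerivAt (fun s => H.mulVec (Δ s)) (H.mulVec V) t :=
    nest_hasDerivAt_mulVec H hX'
  have hu : HasDerivAt (fun s => (p/2) • Δ s + s • deriv Δ s)
      ((p/2) • V + (t • A + (1:ℝ) • V)) t := by
    exact ((hX'.const_smul (p/2)).add ((hasDerivAt_id t).smul hV'))
  -- scalar derivatives
  have hq : HasDerivAt (fun s => Δ s ⬝ᵥ H.mulVec (Δ s))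
      (V ⬝ᵥ H.mulVec X + X ⬝ᵥ H.mulVec V) t := nest_hasDerivAt_dot hX' hHX'
  have hn : HasDerivAt (fun s => Δ s ⬝ᵥ Δ s) (V ⬝ᵥ X + X ⬝ᵥ V) t :=
    nest_hasDerivAt_dot hX' hX'
  have hw : HasDerivAt (fun s => ((p/2) • Δ s + s • deriv Δ s) ⬝ᵥ ((p/2) • Δ s + s • deriv Δ s))
      (((p/2) • V + (t • A + (1:ℝ) • V)) ⬝ᵥ ((p/2) • X + t • V)
        + ((p/2) • X + t • V) ⬝ᵥ ((p/2) • V + (t • A + (1:ℝ) • V))) t :=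
    nest_hasDerivAt_dot hu hu
  -- power derivatives
  have hP1 : HasDerivAt (fun s : ℝ => s ^ p) (p * t ^ (p-1)) t :=
    Real.hasDerivAt_rpow_const (Or.inl ht.ne')
  have hP2 : HasDerivAt (fun s : ℝ => s ^ (p-2)) ((p-2) * t ^ (p-3)) t := by
    have := Real.hasDerivAt_rpow_const (p := p-2) (x := t) (Or.inl ht.ne')
    have h32 : p - 2 - 1 = p - 3 := by ring
    rwa [h32] at this
  -- energy derivative
  have hE : HasDerivAt (nestE γ p H Δ)
      ((p * t ^ (p-1) * (X ⬝ᵥ H.mulVec X) + t ^ p * (V ⬝ᵥ H.mulVec X + X ⬝ᵥ H.mulVec V)) / 2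
       + ((p-2) * t ^ (p-3) * (((p/2) • X + t • V) ⬝ᵥ ((p/2) • X + t • V))
          + t ^ (p-2) * (((p/2) • V + (t • A + (1:ℝ) • V)) ⬝ᵥ ((p/2) • X + t • V)
            + ((p/2) • X + t • V) ⬝ᵥ ((p/2) • V + (t • A + (1:ℝ) • V)))) / 2
       + β * ((p-2) * t ^ (p-3) * (X ⬝ᵥ X) + t ^ (p-2) * (V ⬝ᵥ X + X ⬝ᵥ V)) / 2) t := by
    unfold nestE
    exact (((hP1.mul hq).div_const 2).add (((hP2.mul hw).div_const 2))).add
      (((hP2.mul hn).const_mul β).div_const 2)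
  
  -- clean form of the energy derivative
  have hQN : μ * (X ⬝ᵥ X) ≤ X ⬝ᵥ H.mulVec X := by
    have h := hstr X
    have h2 : ∑ i, (X i)^2 = X ⬝ᵥ X := by
      simp [dotProduct, pow_two]
    rwa [h2] at h
  have hN0 : 0 ≤ X ⬝ᵥ X := nest_dot_self_nonneg X
  have hP0 : 0 ≤ V ⬝ᵥ V := nest_dot_self_nonneg V
  have hW0 : 0 ≤ ((p/2) • X + t • V) ⬝ᵥ ((p/2) • X + t • V) := nest_dot_self_nonneg _
  have hQ0 : 0 ≤ X ⬝ᵥ H.mulVec X := le_trans (by positivity) hQN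
  have hsym : X ⬝ᵥ H.mulVec V = V ⬝ᵥ H.mulVec X := nest_dot_symm hH X V
  have hβ1 : (1:ℝ) ≤ γ + 1 - 3*p/2 := by linarith
  have hβpos : 0 < β := by rw [hβ]; nlinarith
  have halnn : 0 ≤ al := by rw [hal]; nlinarith
  have hpγ : p - γ ≤ 0 := by linarith
  have hT0 : (0:ℝ) ≤ t ^ (p-3) := Real.rpow_nonneg ht.le _
  have hpow2 : t ^ (p-2) = t ^ (p-3) * t := by
    calc t ^ (p-2) = t ^ ((p-3) + 1) := by congr 1; ring
    _ = t ^ (p-3) * t ^ (1:ℝ) := Real.rpow_add ht _ _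
    _ = t ^ (p-3) * t := by rw [Real.rpow_one]
  have hpow1 : t ^ (p-1) = t ^ (p-3) * t^2 := by
    calc t ^ (p-1) = t ^ ((p-3) + 2) := by congr 1; ring
    _ = t ^ (p-3) * t ^ (2:ℝ) := Real.rpow_add ht _ _
    _ = t ^ (p-3) * t^2 := by
        rw [show (2:ℝ) = ((2:ℕ):ℝ) by norm_num, Real.rpow_natCast]
  have hpow0 : t ^ p = t ^ (p-3) * t^3 := by
    calc t ^ p = t ^ ((p-3) + 3) := by congr 1; ring
    _ = t ^ (p-3) * t ^ (3:ℝ) := Real.rpow_add ht _ _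
    _ = t ^ (p-3) * t^3 := by
        rw [show (3:ℝ) = ((3:ℕ):ℝ) by norm_num, Real.rpow_natCast]
  have hE2 : HasDerivAt (nestE γ p H Δ)
      (al * t ^ (p-3) * (X ⬝ᵥ X) + (p - γ) * t ^ (p-1) * (V ⬝ᵥ V)) t := by
    convert hE using 1
    rw [hAeq]
    simp only [dotProduct_add, add_dotProduct, smul_dotProduct,
      dotProduct_smul, sub_dotProduct, dotProduct_sub,
      neg_dotProduct, dotProduct_neg, smul_eq_mul, smul_smul, smul_neg]
    simp only [dotProduct_comm V X, dotProduct_comm (H.mulVec X) X,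
      dotProduct_comm (H.mulVec X) V, hsym]
    rw [hpow2, hpow1, hpow0]
    field_simp
    ring
  
  -- derivative of the exponential integrating factor
  have hinv : HasDerivAt (fun s : ℝ => (s^2)⁻¹) (-(2*t) / (t^2)^2) t := by
    have h := (hasDerivAt_pow 2 t).inv (pow_ne_zero 2 ht.ne')
    exact h.congr_deriv (by norm_num)
  have hg : HasDerivAt (fun s : ℝ => exp (al/μ * (s^2)⁻¹))
      (exp (al/μ * (t^2)⁻¹) * (al/μ * (-(2*t) / (t^2)^2))) t := by
    have := (hinv.const_mul (al/μ)).exp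
    convert this using 1
  have hFfun : nestF γ p μ H Δ = fun s => nestE γ p H Δ s * exp (al/μ * (s^2)⁻¹) := by
    funext s
    simp only [nestF, hal, hβ]
  have hF : HasDerivAt (nestF γ p μ H Δ)
      ((al * t ^ (p-3) * (X ⬝ᵥ X) + (p - γ) * t ^ (p-1) * (V ⬝ᵥ V)) * exp (al/μ * (t^2)⁻¹)
        + nestE γ p H Δ t * (exp (al/μ * (t^2)⁻¹) * (al/μ * (-(2*t) / (t^2)^2)))) t := by
    rw [hFfun]
    exact hE2.mul hg
  refine ⟨_, hF, ?_⟩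
  -- now show the derivative is nonpositive
  have hG : (0:ℝ) < exp (al/μ * (t^2)⁻¹) := exp_pos _
  have hEt : nestE γ p H Δ t = t ^ p * (X ⬝ᵥ H.mulVec X) / 2
      + t ^ (p-2) * (((p/2) • X + t • V) ⬝ᵥ ((p/2) • X + t • V)) / 2
      + β * (t ^ (p-2) * (X ⬝ᵥ X)) / 2 := by
    simp only [nestE, hβ, hX, hV]
  have ht3 : (0:ℝ) < t^3 := by positivity
  have hTt : (0:ℝ) ≤ t ^ (p-2) := Real.rpow_nonneg ht.le _
  have hElb : t ^ p * (X ⬝ᵥ H.mulVec X) / 2 ≤ nestE γ p H Δ t := by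
    rw [hEt]
    have h1 : 0 ≤ t ^ (p-2) * (((p/2) • X + t • V) ⬝ᵥ ((p/2) • X + t • V)) / 2 :=
      div_nonneg (mul_nonneg hTt hW0) (by norm_num)
    have h2 : 0 ≤ β * (t ^ (p-2) * (X ⬝ᵥ X)) / 2 :=
      div_nonneg (mul_nonneg hβpos.le (mul_nonneg hTt hN0)) (by norm_num)
    linarith
  have hE0 : 0 ≤ nestE γ p H Δ t := by
    have : 0 ≤ t ^ p * (X ⬝ᵥ H.mulVec X) / 2 :=
      div_nonneg (mul_nonneg (Real.rpow_nonneg ht.le p) hQ0) (by norm_num)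
    linarith
  -- main chain
  have hfrac : -(2*t) / (t^2)^2 = -(2/t^3) := by
    field_simp
  have step1 : al * t ^ (p-3) * (X ⬝ᵥ X) + (p - γ) * t ^ (p-1) * (V ⬝ᵥ V)
      ≤ al * t ^ (p-3) * (X ⬝ᵥ X) := by
    have h1 : 0 ≤ t ^ (p-1) := Real.rpow_nonneg ht.le _
    have h2 : (p - γ) * t ^ (p-1) ≤ 0 := mul_nonpos_iff.mpr (Or.inr ⟨hpγ, h1⟩)
    have h3 : (p - γ) * t ^ (p-1) * (V ⬝ᵥ V) ≤ 0 := mul_nonpos_iff.mpr (Or.inr ⟨h2, hP0⟩)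
    linarith
  have step2 : al * t ^ (p-3) * (X ⬝ᵥ X) ≤ al/μ * (2/t^3) * (t ^ p * (X ⬝ᵥ H.mulVec X) / 2) := by
    rw [hpow0]
    rw [show al/μ * (2/t^3) * (t ^ (p-3) * t^3 * (X ⬝ᵥ H.mulVec X) / 2)
        = al * (t ^ (p-3) * (X ⬝ᵥ H.mulVec X)) / μ by field_simp]
    rw [le_div_iff₀ hμ]
    calc al * t ^ (p-3) * (X ⬝ᵥ X) * μ = (al * t ^ (p-3)) * (μ * (X ⬝ᵥ X)) := by ring
    _ ≤ (al * t ^ (p-3)) * (X ⬝ᵥ H.mulVec X) :=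
        mul_le_mul_of_nonneg_left hQN (mul_nonneg halnn hT0)
    _ = al * (t ^ (p-3) * (X ⬝ᵥ H.mulVec X)) := by ring
  have step3 : al/μ * (2/t^3) * (t ^ p * (X ⬝ᵥ H.mulVec X) / 2)
      ≤ al/μ * (2/t^3) * nestE γ p H Δ t := by
    have hc : 0 ≤ al/μ * (2/t^3) := by positivity
    exact mul_le_mul_of_nonneg_left hElb hc
  have hD : al * t ^ (p-3) * (X ⬝ᵥ X) + (p - γ) * t ^ (p-1) * (V ⬝ᵥ V)
      + nestE γ p H Δ t * (al/μ * (-(2*t) / (t^2)^2)) ≤ 0 := by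
    rw [hfrac]
    have : nestE γ p H Δ t * (al/μ * -(2/t^3)) = -(al/μ * (2/t^3) * nestE γ p H Δ t) := by ring
    rw [this]
    linarith
  calc (al * t ^ (p-3) * (X ⬝ᵥ X) + (p - γ) * t ^ (p-1) * (V ⬝ᵥ V)) * exp (al/μ * (t^2)⁻¹)
        + nestE γ p H Δ t * (exp (al/μ * (t^2)⁻¹) * (al/μ * (-(2*t) / (t^2)^2)))
      = (al * t ^ (p-3) * (X ⬝ᵥ X) + (p - γ) * t ^ (p-1) * (V ⬝ᵥ V)
          + nestE γ p H Δ t * (al/μ * (-(2*t) / (t^2)^2))) * exp (al/μ * (t^2)⁻¹) := by ring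
    _ ≤ 0 := mul_nonpos_iff.mpr (Or.inr ⟨hD, hG.le⟩)

lemma nest_dot_add_le {n : ℕ} (x y : Fin n → ℝ) :
    (x + y) ⬝ᵥ (x + y) ≤ 2 * (x ⬝ᵥ x) + 2 * (y ⬝ᵥ y) := by
  simp only [dotProduct, Pi.add_apply, Finset.mul_sum, ← Finset.sum_add_distrib]
  refine Finset.sum_le_sum fun i _ => by nlinarith [sq_nonneg (x i - y i)]

lemma nest_dot_smul_smul {n : ℕ} (c : ℝ) (x : Fin n → ℝ) :
    (c • x) ⬝ᵥ (c • x) = c^2 * (x ⬝ᵥ x) := by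
  simp only [smul_dotProduct, dotProduct_smul, smul_eq_mul]
  ring

lemma nestF_anti (γ p : ℝ) (hγ : 3 < γ) (hp : 2 ≤ p) (hp3 : 3*p ≤ 2*γ)
    {n : ℕ} (H : Matrix (Fin n) (Fin n) ℝ) (hH : H.IsSymm)
    (μ : ℝ) (hμ : 0 < μ)
    (hstr : ∀ v : Fin n → ℝ, μ * (∑ i, (v i) ^ 2) ≤ v ⬝ᵥ H.mulVec v)
    (Δ : ℝ → Fin n → ℝ)
    (hd1 : ∀ t, 0 < t → HasDerivAt Δ (deriv Δ t) t)
    (hd2 : ∀ t, 0 < t → HasDerivAt (deriv Δ) (deriv (deriv Δ) t) t)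
    (hODE : ∀ t : ℝ, 0 < t →
      deriv (deriv Δ) t + (γ / t) • deriv Δ t + H.mulVec (Δ t) = 0) :
    AntitoneOn (nestF γ p μ H Δ) (Set.Ioi 0) := by
  have key := nestF_deriv_nonpos γ p hγ hp hp3 H hH μ hμ hstr Δ hd1 hd2 hODE
  refine antitoneOn_of_deriv_nonpos (convex_Ioi 0) ?_ ?_ ?_
  · intro t ht
    obtain ⟨d, hd, _⟩ := key t ht
    exact hd.continuousAt.continuousWithinAt
  · rw [interior_Ioi]
    intro t ht
    obtain ⟨d, hd, _⟩ := key t ht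
    exact hd.differentiableAt.differentiableWithinAt
  · rw [interior_Ioi]
    intro t ht
    obtain ⟨d, hd, hd0⟩ := key t ht
    rw [hd.deriv]
    exact hd0

lemma nest_tendsto_dot {n : ℕ} {α : Type*} {l : Filter α} {f g : α → Fin n → ℝ}
    {lf lg : Fin n → ℝ} (hf : Filter.Tendsto f l (nhds lf))
    (hg : Filter.Tendsto g l (nhds lg)) :
    Filter.Tendsto (fun s => f s ⬝ᵥ g s) l (nhds (lf ⬝ᵥ lg)) := by
  simp only [dotProduct]
  exact tendsto_finset_sum _ fun i _ =>
    (tendsto_pi_nhds.mp hf i).mul (tendsto_pi_nhds.mp hg i)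

lemma nest_tendsto_mulVec {n : ℕ} {α : Type*} {l : Filter α}
    (H : Matrix (Fin n) (Fin n) ℝ) {f : α → Fin n → ℝ} {lf : Fin n → ℝ}
    (hf : Filter.Tendsto f l (nhds lf)) :
    Filter.Tendsto (fun s => H.mulVec (f s)) l (nhds (H.mulVec lf)) := by
  rw [tendsto_pi_nhds]
  intro i
  simp only [Matrix.mulVec, dotProduct]
  exact tendsto_finset_sum _ fun j _ => (tendsto_pi_nhds.mp hf j).const_mul (H i j)

set_option maxHeartbeats 1600000 in
/-- Su–Boyd–Candès style convergence for the Nesterov error dynamics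
`Δ'' + (γ/t)Δ' + HΔ = 0` with a `μ`-strongly convex quadratic pseudo-loss:
`(1/2)⟨Δ(t), HΔ(t)⟩ ≤ C ‖Δ(0)‖² / (μ^{a/2-1} t^a)`. -/
theorem nesterov_pseudo_loss_polynomial_decay
    (γ a : ℝ) (hγ : 3 < γ) (ha : 2 ≤ a) (ha' : a ≤ 2 * γ / 3) :
    ∃ C : ℝ, 0 < C ∧
      ∀ (n : ℕ), 0 < n →
      ∀ (H : Matrix (Fin n) (Fin n) ℝ), H.IsSymm →
      ∀ (μ : ℝ), 0 < μ →
        (∀ v : Fin n → ℝ, μ * (∑ i, (v i) ^ 2) ≤ v ⬝ᵥ H.mulVec v) →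
      ∀ (Δ : ℝ → (Fin n → ℝ)),
        ContinuousOn Δ (Set.Ici 0) →
        ContDiffOn ℝ 2 Δ (Set.Ioi 0) →
        Filter.Tendsto (deriv Δ) (nhdsWithin 0 (Set.Ioi 0)) (nhds 0) →
        (∀ t : ℝ, 0 < t →
          deriv (deriv Δ) t + (γ / t) • deriv Δ t + H.mulVec (Δ t) = 0) →
        ∀ t : ℝ, 0 < t →
          (1 / 2) * (Δ t ⬝ᵥ H.mulVec (Δ t))
            ≤ C * (∑ i, (Δ 0 i) ^ 2) / (μ ^ (a / 2 - 1) * t ^ a) := by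
  have hβa1 : (1:ℝ) ≤ γ + 1 - 3*a/2 := by linarith
  have hβa : (0:ℝ) < a/2*(γ+1-3*a/2) := by nlinarith
  have halann : (0:ℝ) ≤ (a-2)*(a^2/4 + a/2*(γ+1-3*a/2))/2 := by nlinarith
  have hC1pos : (0:ℝ) < 3 + a/2*(γ+1-3*a/2) + 2*(a/2-1)^2 := by nlinarith [sq_nonneg (a/2-1)]
  have hCpos : (0:ℝ) < (γ-1)/2 * ((3 + a/2*(γ+1-3*a/2) + 2*(a/2-1)^2)
      * Real.exp ((a-2)*(a^2/4 + a/2*(γ+1-3*a/2))/2) + 1) := by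
    have he := Real.exp_pos ((a-2)*(a^2/4 + a/2*(γ+1-3*a/2))/2)
    have : (0:ℝ) < (3 + a/2*(γ+1-3*a/2) + 2*(a/2-1)^2)
      * Real.exp ((a-2)*(a^2/4 + a/2*(γ+1-3*a/2))/2) + 1 := by nlinarith
    apply mul_pos (by linarith) this
  refine ⟨_, hCpos, ?_⟩
  intro n hn H hH μ hμ hstr Δ hcont hC2 hV0lim hODE t ht
  -- basic facts
  have hdot : ∀ v : Fin n → ℝ, (∑ i, (v i)^2) = v ⬝ᵥ v := fun v => by
    simp [dotProduct, pow_two]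
  have hstr' : ∀ v : Fin n → ℝ, μ * (v ⬝ᵥ v) ≤ v ⬝ᵥ H.mulVec v := fun v => by
    rw [← hdot]; exact hstr v
  have hQnn : ∀ v : Fin n → ℝ, 0 ≤ v ⬝ᵥ H.mulVec v := fun v =>
    le_trans (mul_nonneg hμ.le (nest_dot_self_nonneg v)) (hstr' v)
  have hd1 : ∀ s : ℝ, 0 < s → HasDerivAt Δ (deriv Δ s) s := fun s hs =>
    ((hC2.differentiableOn (by norm_num)).differentiableAt (isOpen_Ioi.mem_nhds hs)).hasDerivAt
  have hC2' : ContDiffOn ℝ 1 (deriv Δ) (Set.Ioi 0) :=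
    hC2.deriv_of_isOpen isOpen_Ioi le_rfl
  have hd2 : ∀ s : ℝ, 0 < s → HasDerivAt (deriv Δ) (deriv (deriv Δ) s) s := fun s hs =>
    ((hC2'.differentiableOn (by norm_num)).differentiableAt (isOpen_Ioi.mem_nhds hs)).hasDerivAt
  have anti2 := nestF_anti γ 2 hγ le_rfl (by linarith) H hH μ hμ hstr Δ hd1 hd2 hODE
  have antia := nestF_anti γ a hγ ha (by linarith) H hH μ hμ hstr Δ hd1 hd2 hODE
  have hF2 : ∀ s : ℝ, nestF γ 2 μ H Δ s = nestE γ 2 H Δ s := by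
    intro s
    norm_num [nestF]
  have hE2fun : ∀ s : ℝ, nestE γ 2 H Δ s = s^(2:ℝ) * (Δ s ⬝ᵥ H.mulVec (Δ s))/2
      + ((Δ s + s • deriv Δ s) ⬝ᵥ (Δ s + s • deriv Δ s))/2
      + (γ-2) * (Δ s ⬝ᵥ Δ s)/2 := by
    intro s
    have h0 : (2:ℝ) - 2 = 0 := by norm_num
    rw [nestE, h0, Real.rpow_zero]
    norm_num
    left; ring
  set N0 : ℝ := Δ 0 ⬝ᵥ Δ 0 with hN0
  have hN0nn : 0 ≤ N0 := nest_dot_self_nonneg _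
  -- the limit of the order-2 energy at 0+
  have hEl : Filter.Tendsto (nestE γ 2 H Δ) (nhdsWithin 0 (Set.Ioi 0))
      (nhds ((γ-1) * N0 / 2)) := by
    have hΔ0 : Filter.Tendsto Δ (nhdsWithin 0 (Set.Ioi 0)) (nhds (Δ 0)) :=
      Filter.Tendsto.mono_left (hcont 0 (Set.self_mem_Ici))
        (nhdsWithin_mono _ Set.Ioi_subset_Ici_self)
    have hid : Filter.Tendsto (fun s : ℝ => s) (nhdsWithin 0 (Set.Ioi 0)) (nhds 0) :=
      Filter.tendsto_id.mono_right nhdsWithin_le_nhds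
    have hsV : Filter.Tendsto (fun s : ℝ => s • deriv Δ s) (nhdsWithin 0 (Set.Ioi 0))
        (nhds (0 : Fin n → ℝ)) := by
      have := hid.smul hV0lim
      simpa using this
    have hu2 : Filter.Tendsto (fun s : ℝ => Δ s + s • deriv Δ s) (nhdsWithin 0 (Set.Ioi 0))
        (nhds (Δ 0)) := by
      have := hΔ0.add hsV
      simpa using this
    have hq0 : Filter.Tendsto (fun s => Δ s ⬝ᵥ H.mulVec (Δ s)) (nhdsWithin 0 (Set.Ioi 0))
        (nhds (Δ 0 ⬝ᵥ H.mulVec (Δ 0))) := nest_tendsto_dot hΔ0 (nest_tendsto_mulVec H hΔ0)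
    have hr2 : Filter.Tendsto (fun s : ℝ => s^(2:ℝ)) (nhdsWithin 0 (Set.Ioi 0))
        (nhds 0) := by
      have := hid.rpow_const (p := 2) (Or.inr (by norm_num))
      simpa using this
    have hall := (((hr2.mul hq0).div_const 2).add
        ((nest_tendsto_dot hu2 hu2).div_const 2)).add
        (((nest_tendsto_dot hΔ0 hΔ0).const_mul (γ-2)).div_const 2)
    have heq : (0:ℝ) * (Δ 0 ⬝ᵥ H.mulVec (Δ 0)) / 2 + (Δ 0 ⬝ᵥ Δ 0) / 2
        + (γ-2) * (Δ 0 ⬝ᵥ Δ 0) / 2 = (γ-1) * N0 / 2 := by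
      rw [hN0]; ring
    rw [heq] at hall
    exact hall.congr fun s => (hE2fun s).symm
  have hB1 : ∀ s : ℝ, 0 < s → nestE γ 2 H Δ s ≤ (γ-1) * N0 / 2 := by
    intro s hs
    refine ge_of_tendsto hEl ?_
    filter_upwards [Ioo_mem_nhdsGT_of_mem (⟨le_rfl, hs⟩ : (0:ℝ) ∈ Set.Ico 0 s)] with r hr
    have h := anti2 (Set.mem_Ioi.mpr hr.1) (Set.mem_Ioi.mpr hs) hr.2.le
    rw [hF2, hF2] at h
    exact h
  -- componentwise consequences
  have hQb : ∀ s : ℝ, 0 < s → s^(2:ℝ) * (Δ s ⬝ᵥ H.mulVec (Δ s)) / 2 ≤ (γ-1) * N0 / 2 := by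
    intro s hs
    have h := hB1 s hs
    rw [hE2fun s] at h
    have h1 : 0 ≤ ((Δ s + s • deriv Δ s) ⬝ᵥ (Δ s + s • deriv Δ s))/2 :=
      div_nonneg (nest_dot_self_nonneg _) (by norm_num)
    have h2 : 0 ≤ (γ-2) * (Δ s ⬝ᵥ Δ s)/2 :=
      div_nonneg (mul_nonneg (by linarith) (nest_dot_self_nonneg _)) (by norm_num)
    linarith
  have hWb : ∀ s : ℝ, 0 < s →
      ((Δ s + s • deriv Δ s) ⬝ᵥ (Δ s + s • deriv Δ s)) ≤ (γ-1) * N0 := by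
    intro s hs
    have h := hB1 s hs
    rw [hE2fun s] at h
    have h1 : 0 ≤ s^(2:ℝ) * (Δ s ⬝ᵥ H.mulVec (Δ s))/2 :=
      div_nonneg (mul_nonneg (Real.rpow_nonneg hs.le _) (hQnn _)) (by norm_num)
    have h2 : 0 ≤ (γ-2) * (Δ s ⬝ᵥ Δ s)/2 :=
      div_nonneg (mul_nonneg (by linarith) (nest_dot_self_nonneg _)) (by norm_num)
    linarith
  have hNb : ∀ s : ℝ, 0 < s → s^(2:ℝ) * (μ * (Δ s ⬝ᵥ Δ s)) ≤ (γ-1) * N0 := by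
    intro s hs
    have h := hQb s hs
    have h2 : s^(2:ℝ) * (μ * (Δ s ⬝ᵥ Δ s)) ≤ s^(2:ℝ) * (Δ s ⬝ᵥ H.mulVec (Δ s)) :=
      mul_le_mul_of_nonneg_left (hstr' _) (Real.rpow_nonneg hs.le _)
    linarith
  
  -- common setup for the conclusion
  rw [hdot (Δ 0), ← hN0]
  have hta : (0:ℝ) < t ^ a := Real.rpow_pos_of_pos ht a
  have hmua : (0:ℝ) < μ ^ (a/2-1) := Real.rpow_pos_of_pos hμ _
  have hden : (0:ℝ) < μ ^ (a/2-1) * t ^ a := mul_pos hmua hta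
  rw [le_div_iff₀ hden]
  have hmu1 : μ ^ (a/2-1) * μ ^ ((1:ℝ)-a/2) = 1 := by
    rw [← Real.rpow_add hμ, show a/2-1+((1:ℝ)-a/2) = 0 by ring, Real.rpow_zero]
  have hKnn : (0:ℝ) ≤ (3 + a/2*(γ+1-3*a/2) + 2*(a/2-1)^2)
      * Real.exp ((a-2)*(a^2/4 + a/2*(γ+1-3*a/2))/2) :=
    mul_nonneg hC1pos.le (Real.exp_pos _).le
  rcases le_or_gt t (μ ^ (-(1:ℝ)/2)) with hcase | hcase
  · -- small times: use the order-2 energy directly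
    have ht2 : (0:ℝ) < t^(2:ℝ) := Real.rpow_pos_of_pos ht _
    have hQt := hQb t ht
    have hta2 : t ^ a = t^(2:ℝ) * t^(a-2) := by
      rw [← Real.rpow_add ht]; congr 1; ring
    have h1 : t^(a-2) ≤ μ^((1:ℝ)-a/2) := by
      have h := Real.rpow_le_rpow ht.le hcase (by linarith : (0:ℝ) ≤ a-2)
      rw [← Real.rpow_mul hμ.le, show (-(1:ℝ)/2*(a-2)) = 1-a/2 by ring] at h
      exact h
    have hc1 : (0:ℝ) ≤ (γ-1) * N0 / 2 :=
      div_nonneg (mul_nonneg (by linarith) hN0nn) (by norm_num)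
    calc 1/2 * (Δ t ⬝ᵥ H.mulVec (Δ t)) * (μ ^ (a/2-1) * t ^ a)
        = (t^(2:ℝ) * (Δ t ⬝ᵥ H.mulVec (Δ t)) / 2) * (μ ^ (a/2-1) * t^(a-2)) := by
          rw [hta2]; ring
      _ ≤ ((γ-1) * N0 / 2) * (μ ^ (a/2-1) * t^(a-2)) := by
          apply mul_le_mul_of_nonneg_right hQt
          positivity
      _ ≤ ((γ-1) * N0 / 2) * (μ ^ (a/2-1) * μ^((1:ℝ)-a/2)) := by
          apply mul_le_mul_of_nonneg_left (mul_le_mul_of_nonneg_left h1 hmua.le) hc1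
      _ = (γ-1) * N0 / 2 := by rw [hmu1]; ring
      _ ≤ (γ-1)/2 * ((3 + a/2*(γ+1-3*a/2) + 2*(a/2-1)^2)
            * Real.exp ((a-2)*(a^2/4 + a/2*(γ+1-3*a/2))/2) + 1) * N0 := by
          nlinarith [mul_nonneg hKnn hN0nn]
  · -- large times: use the order-a energy from the pivot time s0 = μ^(-1/2)
    set s0 : ℝ := μ ^ (-(1:ℝ)/2) with hs0def
    have hs0 : 0 < s0 := Real.rpow_pos_of_pos hμ _
    have hs0r2 : s0^(2:ℝ) = μ⁻¹ := by
      rw [hs0def, ← Real.rpow_mul hμ.le, show (-(1:ℝ)/2*2) = -1 by ring, Real.rpow_neg_one]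
    have hs0mu : s0^(2:ℝ) * μ = 1 := by
      rw [hs0r2]; field_simp
    have hs0n : ((s0^2 : ℝ))⁻¹ = μ := by
      have h : (s0:ℝ)^(2:ℕ) = s0^(2:ℝ) := by
        rw [← Real.rpow_natCast s0 2]; norm_num
      rw [h, hs0r2, inv_inv]
    have hsa2 : s0^(a-2) = μ^((1:ℝ)-a/2) := by
      rw [hs0def, ← Real.rpow_mul hμ.le, show (-(1:ℝ)/2*(a-2)) = 1-a/2 by ring]
    have hT0 : (0:ℝ) ≤ s0^(a-2) := Real.rpow_nonneg hs0.le _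
    -- bound on nestE γ a at s0
    have hQs := hQb s0 hs0
    have hWs := hWb s0 hs0
    have hNs : (Δ s0 ⬝ᵥ Δ s0) ≤ (γ-1) * N0 := by
      have h := hNb s0 hs0
      have heq : s0^(2:ℝ) * (μ * (Δ s0 ⬝ᵥ Δ s0)) = Δ s0 ⬝ᵥ Δ s0 := by
        rw [← mul_assoc, hs0mu, one_mul]
      rwa [heq] at h
    have hvec : (a/2) • Δ s0 + s0 • deriv Δ s0
        = ((a/2-1) • Δ s0) + (Δ s0 + s0 • deriv Δ s0) := by
      module
    have hus : ((a/2) • Δ s0 + s0 • deriv Δ s0) ⬝ᵥ ((a/2) • Δ s0 + s0 • deriv Δ s0)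
        ≤ 2*(a/2-1)^2 * (Δ s0 ⬝ᵥ Δ s0)
          + 2 * ((Δ s0 + s0 • deriv Δ s0) ⬝ᵥ (Δ s0 + s0 • deriv Δ s0)) := by
      rw [hvec]
      have h := nest_dot_add_le ((a/2-1) • Δ s0) (Δ s0 + s0 • deriv Δ s0)
      rw [nest_dot_smul_smul] at h
      linarith [h]
    have hsa : s0 ^ a = s0^(a-2) * s0^(2:ℝ) := by
      rw [← Real.rpow_add hs0]; congr 1; ring
    have hEs0 : nestE γ a H Δ s0 ≤ (3 + a/2*(γ+1-3*a/2) + 2*(a/2-1)^2)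
        * (μ^((1:ℝ)-a/2) * ((γ-1) * N0 / 2)) := by
      rw [nestE, hsa, hsa2]
      have e1 : μ^((1:ℝ)-a/2) * s0^(2:ℝ) * (Δ s0 ⬝ᵥ H.mulVec (Δ s0)) / 2
          ≤ μ^((1:ℝ)-a/2) * ((γ-1) * N0 / 2) := by
        have : μ^((1:ℝ)-a/2) * s0^(2:ℝ) * (Δ s0 ⬝ᵥ H.mulVec (Δ s0)) / 2
            = μ^((1:ℝ)-a/2) * (s0^(2:ℝ) * (Δ s0 ⬝ᵥ H.mulVec (Δ s0)) / 2) := by ring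
        rw [this]
        exact mul_le_mul_of_nonneg_left hQs (Real.rpow_nonneg hμ.le _)
      have hmunn : (0:ℝ) ≤ μ^((1:ℝ)-a/2) := Real.rpow_nonneg hμ.le _
      have e2 : μ^((1:ℝ)-a/2) * (((a/2) • Δ s0 + s0 • deriv Δ s0) ⬝ᵥ
            ((a/2) • Δ s0 + s0 • deriv Δ s0)) / 2
          ≤ μ^((1:ℝ)-a/2) * ((2*(a/2-1)^2 + 2) * ((γ-1) * N0)) / 2 := by
        have hub : (((a/2) • Δ s0 + s0 • deriv Δ s0) ⬝ᵥ ((a/2) • Δ s0 + s0 • deriv Δ s0))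
            ≤ (2*(a/2-1)^2 + 2) * ((γ-1) * N0) := by
          have h1 : 2*(a/2-1)^2 * (Δ s0 ⬝ᵥ Δ s0) ≤ 2*(a/2-1)^2 * ((γ-1) * N0) :=
            mul_le_mul_of_nonneg_left hNs (by positivity)
          have h2 : 2 * ((Δ s0 + s0 • deriv Δ s0) ⬝ᵥ (Δ s0 + s0 • deriv Δ s0))
              ≤ 2 * ((γ-1) * N0) := by linarith
          linarith
        have := mul_le_mul_of_nonneg_left hub hmunn
        linarith
      have e3 : a/2*(γ+1-3*a/2) * (μ^((1:ℝ)-a/2) * (Δ s0 ⬝ᵥ Δ s0)) / 2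
          ≤ a/2*(γ+1-3*a/2) * (μ^((1:ℝ)-a/2) * ((γ-1) * N0)) / 2 := by
        have h1 := mul_le_mul_of_nonneg_left (mul_le_mul_of_nonneg_left hNs hmunn) hβa.le
        linarith
      linarith [e1, e2, e3]
    -- chain of inequalities at time t
    have hexp1 : (1:ℝ) ≤ Real.exp ((a-2)*(a^2/4 + a/2*(γ+1-3*a/2))/2 / μ * ((t^2)⁻¹)) :=
      Real.one_le_exp (by positivity)
    have hEtnn : 0 ≤ nestE γ a H Δ t := by
      rw [nestE]
      have e1 : (0:ℝ) ≤ t ^ a * (Δ t ⬝ᵥ H.mulVec (Δ t)) / 2 :=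
        div_nonneg (mul_nonneg hta.le (hQnn _)) (by norm_num)
      have e2 : (0:ℝ) ≤ t ^ (a-2) * (((a/2) • Δ t + t • deriv Δ t) ⬝ᵥ
          ((a/2) • Δ t + t • deriv Δ t)) / 2 :=
        div_nonneg (mul_nonneg (Real.rpow_nonneg ht.le _) (nest_dot_self_nonneg _)) (by norm_num)
      have e3 : (0:ℝ) ≤ a/2*(γ+1-3*a/2) * (t ^ (a-2) * (Δ t ⬝ᵥ Δ t)) / 2 :=
        div_nonneg (mul_nonneg hβa.le
          (mul_nonneg (Real.rpow_nonneg ht.le _) (nest_dot_self_nonneg _))) (by norm_num)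
      linarith
    have hE_le_F : nestE γ a H Δ t ≤ nestF γ a μ H Δ t := by
      rw [nestF]
      exact le_mul_of_one_le_right hEtnn hexp1
    have hF_anti : nestF γ a μ H Δ t ≤ nestF γ a μ H Δ s0 :=
      antia (Set.mem_Ioi.mpr hs0) (Set.mem_Ioi.mpr (lt_trans hs0 hcase)) hcase.le
    have hFs0 : nestF γ a μ H Δ s0 = nestE γ a H Δ s0
        * Real.exp ((a-2)*(a^2/4 + a/2*(γ+1-3*a/2))/2) := by
      rw [nestF, hs0n]
      congr 2
      field_simp
    have hQtE : t ^ a * (Δ t ⬝ᵥ H.mulVec (Δ t)) / 2 ≤ nestE γ a H Δ t := by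
      rw [nestE]
      have e2 : (0:ℝ) ≤ t ^ (a-2) * (((a/2) • Δ t + t • deriv Δ t) ⬝ᵥ
          ((a/2) • Δ t + t • deriv Δ t)) / 2 :=
        div_nonneg (mul_nonneg (Real.rpow_nonneg ht.le _) (nest_dot_self_nonneg _)) (by norm_num)
      have e3 : (0:ℝ) ≤ a/2*(γ+1-3*a/2) * (t ^ (a-2) * (Δ t ⬝ᵥ Δ t)) / 2 :=
        div_nonneg (mul_nonneg hβa.le
          (mul_nonneg (Real.rpow_nonneg ht.le _) (nest_dot_self_nonneg _))) (by norm_num)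
      linarith
    have hchain : t ^ a * (Δ t ⬝ᵥ H.mulVec (Δ t)) / 2
        ≤ ((3 + a/2*(γ+1-3*a/2) + 2*(a/2-1)^2)
          * Real.exp ((a-2)*(a^2/4 + a/2*(γ+1-3*a/2))/2)) * (μ^((1:ℝ)-a/2) * ((γ-1) * N0 / 2)) := by
      have h1 := le_trans (le_trans hQtE hE_le_F) hF_anti
      rw [hFs0] at h1
      have h2 := mul_le_mul_of_nonneg_right hEs0 (Real.exp_pos ((a-2)*(a^2/4 + a/2*(γ+1-3*a/2))/2)).le
      calc t ^ a * (Δ t ⬝ᵥ H.mulVec (Δ t)) / 2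
          ≤ nestE γ a H Δ s0 * Real.exp ((a-2)*(a^2/4 + a/2*(γ+1-3*a/2))/2) := h1
        _ ≤ (3 + a/2*(γ+1-3*a/2) + 2*(a/2-1)^2)
            * (μ^((1:ℝ)-a/2) * ((γ-1) * N0 / 2))
            * Real.exp ((a-2)*(a^2/4 + a/2*(γ+1-3*a/2))/2) := h2
        _ = ((3 + a/2*(γ+1-3*a/2) + 2*(a/2-1)^2)
            * Real.exp ((a-2)*(a^2/4 + a/2*(γ+1-3*a/2))/2)) * (μ^((1:ℝ)-a/2) * ((γ-1) * N0 / 2)) := by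
            ring
    calc 1/2 * (Δ t ⬝ᵥ H.mulVec (Δ t)) * (μ ^ (a/2-1) * t ^ a)
        = (t ^ a * (Δ t ⬝ᵥ H.mulVec (Δ t)) / 2) * μ ^ (a/2-1) := by ring
      _ ≤ ((3 + a/2*(γ+1-3*a/2) + 2*(a/2-1)^2)
          * Real.exp ((a-2)*(a^2/4 + a/2*(γ+1-3*a/2))/2)) * (μ^((1:ℝ)-a/2) * ((γ-1) * N0 / 2))
          * μ ^ (a/2-1) := mul_le_mul_of_nonneg_right hchain hmua.le
      _ = ((3 + a/2*(γ+1-3*a/2) + 2*(a/2-1)^2)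
          * Real.exp ((a-2)*(a^2/4 + a/2*(γ+1-3*a/2))/2)) * ((γ-1) * N0 / 2)
          * (μ ^ (a/2-1) * μ^((1:ℝ)-a/2)) := by ring
      _ = ((3 + a/2*(γ+1-3*a/2) + 2*(a/2-1)^2)
          * Real.exp ((a-2)*(a^2/4 + a/2*(γ+1-3*a/2))/2)) * ((γ-1) * N0 / 2) := by
          rw [hmu1]; ring
      _ ≤ (γ-1)/2 * ((3 + a/2*(γ+1-3*a/2) + 2*(a/2-1)^2)
            * Real.exp ((a-2)*(a^2/4 + a/2*(γ+1-3*a/2))/2) + 1) * N0 := by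
          nlinarith [mul_nonneg hKnn hN0nn]
end

section
/- For every γ > 3 and every real a with 2 ≤ a ≤ 2γ/3, there exists a constant C > 0, depending only on a and γ, with the following property: for every positive integer n, every λ₀ > 0, every symmetric real n×n matrix H with vᵀHv ≥ (λ₀/2)‖v‖² for all v ∈ ℝⁿ, and every function Δ : [0,∞) → ℝⁿ that is continuous on [0,∞), twice continuously differentiable on (0,∞), satisfies Δ'(t) → 0 as t → 0⁺, and satisfies Δ''(t) + (γ/t)·Δ'(t) + H·Δ(t) = 0 for all t > 0, the loss L(t) := (1/2)‖Δ(t)‖² satisfies L(t) ≤ (C / (t^{a}·(λ₀/2)^{a/2}))·L(0) for all t > 0. -/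
open Real Matrix Set Filter

set_option maxHeartbeats 2000000

private lemma hasDerivAt_dot {n : ℕ} {u w : ℝ → Fin n → ℝ} {u' w' : Fin n → ℝ} {t : ℝ}
    (hu : HasDerivAt u u' t) (hw : HasDerivAt w w' t) :
    HasDerivAt (fun s => u s ⬝ᵥ w s) (u' ⬝ᵥ w t + u t ⬝ᵥ w') t := by
  have h : HasDerivAt (fun s => ∑ i, u s i * w s i)
      (∑ i, (u' i * w t i + u t i * w' i)) t :=
    HasDerivAt.fun_sum fun i _ => (hasDerivAt_pi.1 hu i).mul (hasDerivAt_pi.1 hw i)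
  simpa [dotProduct, Finset.sum_add_distrib] using h

private lemma hasDerivAt_mulVec {n : ℕ} (H : Matrix (Fin n) (Fin n) ℝ)
    {u : ℝ → Fin n → ℝ} {u' : Fin n → ℝ} {t : ℝ} (hu : HasDerivAt u u' t) :
    HasDerivAt (fun s => H.mulVec (u s)) (H.mulVec u') t := by
  rw [hasDerivAt_pi]
  intro i
  have h : HasDerivAt (fun s => ∑ j, H i j * u s j) (∑ j, H i j * u' j) t :=
    HasDerivAt.fun_sum fun j _ => (hasDerivAt_pi.1 hu j).const_mul (H i j)
  simpa [Matrix.mulVec, dotProduct] using h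

private lemma dot_mulVec_symm {n : ℕ} {H : Matrix (Fin n) (Fin n) ℝ} (hH : H.IsSymm)
    (u w : Fin n → ℝ) : u ⬝ᵥ H.mulVec w = w ⬝ᵥ H.mulVec u := by
  simp only [Matrix.mulVec, dotProduct, Finset.mul_sum]
  rw [Finset.sum_comm]
  refine Finset.sum_congr rfl fun i _ => Finset.sum_congr rfl fun j _ => ?_
  rw [← hH.apply i j]; ring

/-- Polynomial decay of the MSE loss under the Nesterov error dynamics
`Δ'' + (γ/t)Δ' + HΔ = 0` when `vᵀHv ≥ (λ₀/2)‖v‖²`: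
`L(t) ≤ (C / (t^a (λ₀/2)^{a/2})) L(0)`. -/
theorem nesterov_loss_polynomial_decay
    (γ a : ℝ) (hγ : 3 < γ) (ha : 2 ≤ a) (ha' : a ≤ 2 * γ / 3) :
    ∃ C : ℝ, 0 < C ∧
      ∀ (n : ℕ), 0 < n →
      ∀ (lam : ℝ), 0 < lam →
      ∀ (H : Matrix (Fin n) (Fin n) ℝ), H.IsSymm →
        (∀ v : Fin n → ℝ, lam / 2 * (∑ i, (v i) ^ 2) ≤ v ⬝ᵥ H.mulVec v) →
      ∀ (Δ : ℝ → (Fin n → ℝ)),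
        ContinuousOn Δ (Set.Ici 0) →
        ContDiffOn ℝ 2 Δ (Set.Ioi 0) →
        Filter.Tendsto (deriv Δ) (nhdsWithin 0 (Set.Ioi 0)) (nhds 0) →
        (∀ t : ℝ, 0 < t →
          deriv (deriv Δ) t + (γ / t) • deriv Δ t + H.mulVec (Δ t) = 0) →
        ∀ t : ℝ, 0 < t →
          (1 / 2) * ∑ i, (Δ t i) ^ 2
            ≤ (C / (t ^ a * (lam / 2) ^ (a / 2))) * ((1 / 2) * ∑ i, (Δ 0 i) ^ 2) := by
  -- constants depending only on a and γ
  set b : ℝ := (a + 1) / 2 with hbdef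
  have hb0 : (3:ℝ)/2 ≤ b := by rw [hbdef]; linarith
  set K : ℝ := b^2*γ + b^2*γ^2 + 1 with hKdef
  have hK1 : (1:ℝ) ≤ K := by nlinarith
  have hK0 : (0:ℝ) < K := by linarith
  set C2 : ℝ := (γ-1)/(γ-2) with hC2def
  have hC2pos : 0 < C2 := div_pos (by linarith) (by linarith)
  set C3 : ℝ := 2*(γ-1) + 2*C2 with hC3def
  have hC3pos : 0 < C3 := by nlinarith
  set C4 : ℝ := (γ-1) + C3 + b*(C3+C2) + b^2*C2 with hC4def
  have hC4pos : 0 < C4 := by nlinarith [mul_pos (show (0:ℝ) < b by linarith) (show (0:ℝ) < C3+C2 by linarith), mul_pos (mul_pos (show (0:ℝ) < b by linarith) (show (0:ℝ) < b by linarith)) hC2pos]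
  clear_value b K C2 C3 C4
  refine ⟨K^(a/2) * (C2 + C4), by positivity, ?_⟩
  intro n hn lam hlam H hsym hH Δ hcont hsmooth hD0 hODE
  set μ : ℝ := lam / 2 with hμdef
  have hμ : 0 < μ := by positivity
  set D : ℝ → Fin n → ℝ := deriv Δ with hDdef
  set D2 : ℝ → Fin n → ℝ := deriv D with hD2def
  set P : ℝ → ℝ := fun s => Δ s ⬝ᵥ Δ s with hPdef
  set Q : ℝ → ℝ := fun s => Δ s ⬝ᵥ D s with hQdef
  set R : ℝ → ℝ := fun s => D s ⬝ᵥ D s with hRdef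
  set F : ℝ → ℝ := fun s => Δ s ⬝ᵥ H.mulVec (Δ s) with hFdef
  have hPsum : ∀ s : ℝ, (∑ i, (Δ s i) ^ 2) = P s := by
    intro s; simp [hPdef, dotProduct, sq]
  -- basic positivity
  have hPpos : ∀ s, 0 ≤ P s := fun s => Finset.sum_nonneg fun i _ => mul_self_nonneg _
  have hRpos : ∀ s, 0 ≤ R s := fun s => Finset.sum_nonneg fun i _ => mul_self_nonneg _
  have hFP : ∀ s, μ * P s ≤ F s := by
    intro s; have h := hH (Δ s); rw [hPsum s] at h; exact h
  have hFpos : ∀ s, 0 ≤ F s := fun s =>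
    le_trans (by nlinarith [hPpos s]) (hFP s)
  -- sums of squares
  have hSOS : ∀ (c d s : ℝ), 0 ≤ c^2 * P s + 2*(c*d) * Q s + d^2 * R s := by
    intro c d s
    have h : c^2 * P s + 2*(c*d) * Q s + d^2 * R s = ∑ i, (c * Δ s i + d * D s i)^2 := by
      simp only [hPdef, hQdef, hRdef, dotProduct, Finset.mul_sum, ← Finset.sum_add_distrib]
      exact Finset.sum_congr rfl fun i _ => by ring
    rw [h]; exact Finset.sum_nonneg fun i _ => sq_nonneg _
  -- differentiability
  have hΔd : ∀ t ∈ Ioi (0:ℝ), HasDerivAt Δ (D t) t := by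
    intro t ht
    exact ((hsmooth.contDiffAt (isOpen_Ioi.mem_nhds ht)).differentiableAt
      (by norm_num)).hasDerivAt
  have hDd : ∀ t ∈ Ioi (0:ℝ), HasDerivAt D (D2 t) t := by
    intro t ht
    have h1 : ContDiffOn ℝ 1 D (Ioi 0) := hsmooth.deriv_of_isOpen isOpen_Ioi (by norm_num)
    exact ((h1.contDiffAt (isOpen_Ioi.mem_nhds ht)).differentiableAt (by norm_num)).hasDerivAt
  have hD2eq : ∀ t : ℝ, 0 < t → D2 t = -((γ/t) • D t) - H.mulVec (Δ t) := by
    intro t ht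
    have h := hODE t ht
    rw [add_assoc, add_eq_zero_iff_eq_neg] at h
    rw [h, neg_add, ← sub_eq_add_neg]
  -- derivatives of the scalar observables
  have hF' : ∀ t ∈ Ioi (0:ℝ), HasDerivAt F (2 * (D t ⬝ᵥ H.mulVec (Δ t))) t := by
    intro t ht
    have h := hasDerivAt_dot (hΔd t ht) (hasDerivAt_mulVec H (hΔd t ht))
    rw [dot_mulVec_symm hsym (Δ t) (D t)] at h
    convert h using 1; ring
  have hP' : ∀ t ∈ Ioi (0:ℝ), HasDerivAt P (2 * Q t) t := by
    intro t ht
    have h := hasDerivAt_dot (hΔd t ht) (hΔd t ht)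
    rw [dotProduct_comm (D t) (Δ t)] at h
    convert h using 1; rw [hQdef]; ring
  have hQ' : ∀ t ∈ Ioi (0:ℝ), HasDerivAt Q (R t - (γ/t) * Q t - F t) t := by
    intro t ht
    have h := hasDerivAt_dot (hΔd t ht) (hDd t ht)
    rw [hD2eq t ht] at h
    convert h using 1
    simp [hQdef, hRdef, hFdef, dotProduct_sub, dotProduct_neg, dotProduct_smul,
      dotProduct_comm (D t) (Δ t), smul_eq_mul]
    ring
  have hR' : ∀ t ∈ Ioi (0:ℝ),
      HasDerivAt R (-(2*γ/t) * R t - 2 * (D t ⬝ᵥ H.mulVec (Δ t))) t := by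
    intro t ht
    have h := hasDerivAt_dot (hDd t ht) (hDd t ht)
    rw [hD2eq t ht] at h
    convert h using 1
    simp [hRdef, dotProduct_sub, dotProduct_neg, dotProduct_smul, sub_dotProduct,
      neg_dotProduct, smul_dotProduct, dotProduct_comm (H.mulVec (Δ t)) (D t), smul_eq_mul]
    ring
  clear_value μ
  -- the a = 2 energy, monotone on all of (0,∞)
  set E2 : ℝ → ℝ := fun s => s^2 * F s + (γ-1) * P s + 2*s*Q s + s^2 * R s with hE2def
  have hE2' : ∀ t ∈ Ioi (0:ℝ), HasDerivAt E2 ((4 - 2*γ) * (t * R t)) t := by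
    intro t ht
    have ht0 : t ≠ 0 := ne_of_gt ht
    have h1 := (hasDerivAt_pow 2 t).mul (hF' t ht)
    have h2 := (hP' t ht).const_mul (γ-1)
    have h3 := ((hasDerivAt_id t).const_mul 2).mul (hQ' t ht)
    have h4 := (hasDerivAt_pow 2 t).mul (hR' t ht)
    have h := ((h1.add h2).add h3).add h4
    refine h.congr_deriv ?_
    simp only [id_eq]
    field_simp
    ring
  have hE2anti : AntitoneOn E2 (Ioi 0) := by
    apply antitoneOn_of_deriv_nonpos (convex_Ioi 0)
    · exact fun t ht => (hE2' t ht).continuousAt.continuousWithinAt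
    · rw [interior_Ioi]
      exact fun t ht => (hE2' t ht).differentiableAt.differentiableWithinAt
    · rw [interior_Ioi]
      intro t ht
      rw [(hE2' t ht).deriv]
      have ht' : (0:ℝ) < t := ht
      nlinarith [mul_nonneg ht'.le (hRpos t)]
  -- limit of E2 at 0⁺
  have hΔ0 : Tendsto Δ (nhdsWithin 0 (Ioi 0)) (nhds (Δ 0)) :=
    ((hcont 0 self_mem_Ici).tendsto).mono_left (nhdsWithin_mono 0 Ioi_subset_Ici_self)
  have hdotc : Continuous fun p : (Fin n → ℝ) × (Fin n → ℝ) => p.1 ⬝ᵥ p.2 := by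
    simp only [dotProduct]
    exact continuous_finset_sum _ fun i _ =>
      ((continuous_apply i).comp continuous_fst).mul ((continuous_apply i).comp continuous_snd)
  have hmvc : Continuous fun v : Fin n → ℝ => H.mulVec v := by
    apply continuous_pi
    intro i
    simp only [Matrix.mulVec, dotProduct]
    exact continuous_finset_sum _ fun j _ => continuous_const.mul (continuous_apply j)
  have htid : Tendsto (fun s : ℝ => s) (nhdsWithin 0 (Ioi 0)) (nhds 0) :=
    tendsto_id.mono_left nhdsWithin_le_nhds
  have htP : Tendsto P (nhdsWithin 0 (Ioi 0)) (nhds (P 0)) :=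
    (hdotc.tendsto _).comp (hΔ0.prodMk_nhds hΔ0)
  have htF : Tendsto F (nhdsWithin 0 (Ioi 0)) (nhds (F 0)) :=
    (hdotc.tendsto _).comp (hΔ0.prodMk_nhds ((hmvc.tendsto _).comp hΔ0))
  have htQ : Tendsto Q (nhdsWithin 0 (Ioi 0)) (nhds (Δ 0 ⬝ᵥ 0)) :=
    (hdotc.tendsto _).comp (hΔ0.prodMk_nhds hD0)
  have htR : Tendsto R (nhdsWithin 0 (Ioi 0)) (nhds ((0 : Fin n → ℝ) ⬝ᵥ 0)) :=
    (hdotc.tendsto _).comp (hD0.prodMk_nhds hD0)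
  have htE2 : Tendsto E2 (nhdsWithin 0 (Ioi 0)) (nhds ((γ-1) * P 0)) := by
    have t1 : Tendsto (fun s : ℝ => s^2 * F s) (nhdsWithin 0 (Ioi 0)) (nhds (0^2 * F 0)) :=
      ((htid.pow 2).mul htF)
    have t2 : Tendsto (fun s : ℝ => (γ-1) * P s) (nhdsWithin 0 (Ioi 0)) (nhds ((γ-1) * P 0)) :=
      htP.const_mul _
    have t3 : Tendsto (fun s : ℝ => 2*s*Q s) (nhdsWithin 0 (Ioi 0)) (nhds (2*0*(Δ 0 ⬝ᵥ 0))) :=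
      ((htid.const_mul 2).mul htQ)
    have t4 : Tendsto (fun s : ℝ => s^2 * R s) (nhdsWithin 0 (Ioi 0))
        (nhds (0^2 * ((0 : Fin n → ℝ) ⬝ᵥ 0))) := ((htid.pow 2).mul htR)
    have := ((t1.add t2).add t3).add t4
    simpa using this
  have hE2le : ∀ t : ℝ, 0 < t → E2 t ≤ (γ-1) * P 0 := by
    intro t ht
    refine ge_of_tendsto htE2 ?_
    filter_upwards [Ioo_mem_nhdsGT_of_mem (Set.left_mem_Ico.2 ht)] with s hs
    exact hE2anti hs.1 ht (le_of_lt hs.2)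
  -- consequences
  have hkey : ∀ t : ℝ, 0 < t →
      (γ-2)*P t ≤ (γ-1)*P 0 ∧ t^2*F t ≤ (γ-1)*P 0 ∧
        P t + 2*t*Q t + t^2*R t ≤ (γ-1)*P 0 := by
    intro t ht
    have h := hE2le t ht
    have hA : 0 ≤ t^2 * F t := mul_nonneg (sq_nonneg t) (hFpos t)
    have hB : 0 ≤ (γ-2) * P t := mul_nonneg (by linarith) (hPpos t)
    have hS : 0 ≤ P t + 2*t*Q t + t^2*R t := by linarith only [hSOS 1 t t]
    have hE : E2 t = t^2*F t + (γ-2)*P t + (P t + 2*t*Q t + t^2*R t) := by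
      rw [hE2def]; ring
    refine ⟨by linarith, by linarith, by linarith⟩
  have hPb : ∀ t : ℝ, 0 < t → P t ≤ C2 * P 0 := by
    intro t ht
    have h := (hkey t ht).1
    rw [hC2def, div_mul_eq_mul_div, le_div_iff₀ (by linarith : (0:ℝ) < γ-2)]
    linarith only [h]
  have hRb : ∀ t : ℝ, 0 < t → t^2 * R t ≤ C3 * P 0 := by
    intro t ht
    have h := (hkey t ht).2.2
    have h2 : 0 ≤ 4*P t + 4*t*Q t + t^2*R t := by nlinarith [hSOS 2 t t]
    have h3 := hPb t ht
    rw [hC3def]; linarith only [h, h2, h3]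
  clear_value P Q R F D D2 E2
  -- the general-a energy
  set cQ : ℝ := 2*b*(a+b-1-γ) with hcQdef
  set cP : ℝ := b^2*(a-2) with hcPdef
  set cR : ℝ := a+2*b-2*γ with hcRdef
  clear_value cQ cP cR
  have hpow : ∀ (s : ℝ), 0 < s → ∀ x : ℝ, s^(x+1) = s^x * s := by
    intro s hs x; rw [Real.rpow_add hs, Real.rpow_one]
  set Ea : ℝ → ℝ := fun s => s^a * F s + s^a * R s + 2*b*(s^(a-1) * Q s)
      + b^2*(s^(a-2) * P s) with hEadef
  have hEa' : ∀ t ∈ Ioi (0:ℝ), HasDerivAt Ea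
      (-(t^(a-1)*F t) + cR*(t^(a-1)*R t) + cQ*(t^(a-2)*Q t) + cP*(t^(a-3)*P t)) t := by
    intro t ht
    have ht0 : (0:ℝ) < t := ht
    have htne : t ≠ 0 := ne_of_gt ht0
    have h1 := (Real.hasDerivAt_rpow_const (p := a) (Or.inl htne)).mul (hF' t ht)
    have h2 := (Real.hasDerivAt_rpow_const (p := a) (Or.inl htne)).mul (hR' t ht)
    have h3 := ((Real.hasDerivAt_rpow_const (p := a-1) (Or.inl htne)).mul
      (hQ' t ht)).const_mul (2*b)
    have h4 := ((Real.hasDerivAt_rpow_const (p := a-2) (Or.inl htne)).mul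
      (hP' t ht)).const_mul (b^2)
    have h := ((h1.add h2).add h3).add h4
    refine h.congr_deriv ?_
    have e1 : t^a = t^(a-1)*t := by rw [← hpow t ht0 (a-1)]; congr 1; ring
    have e2 : t^(a-1) = t^(a-2)*t := by rw [← hpow t ht0 (a-2)]; congr 1; ring
    have e3 : t^(a-2) = t^(a-3)*t := by rw [← hpow t ht0 (a-3)]; congr 1; ring
    have e4 : t^(a-1-1) = t^(a-3)*t := by rw [← hpow t ht0 (a-3)]; congr 1; ring
    have e5 : t^(a-2-1) = t^(a-3) := by congr 1; ring
    rw [hcQdef, hcPdef, hcRdef, hbdef, e4, e5, e1, e2, e3]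
    field_simp
    ring
  clear_value Ea
  -- constants facts
  have hcR1 : cR ≤ -1 := by rw [hcRdef, hbdef]; linarith
  have hcKb : cP + cQ^2/4 ≤ K := by
    have h5 : (a+b-1-γ)^2 ≤ γ^2 := by
      nlinarith [mul_nonneg (show (0:ℝ) ≤ 2*γ-(a+b-1) by rw [hbdef]; linarith)
        (show (0:ℝ) ≤ a+b-1 by rw [hbdef]; linarith)]
    rw [hcPdef, hcQdef, hKdef]
    nlinarith [mul_le_mul_of_nonneg_left h5 (sq_nonneg b),
      mul_le_mul_of_nonneg_left (show a-2 ≤ γ by linarith) (sq_nonneg b)]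
  -- the threshold time
  set t₀ : ℝ := Real.sqrt (K/μ) with ht₀def
  have hKμ : (0:ℝ) < K/μ := div_pos hK0 hμ
  have ht₀pos : 0 < t₀ := Real.sqrt_pos.2 hKμ
  have ht₀sq : t₀^2 = K/μ := Real.sq_sqrt hKμ.le
  clear_value t₀
  have hEaanti : AntitoneOn Ea (Ici t₀) := by
    apply antitoneOn_of_deriv_nonpos (convex_Ici t₀)
    · intro s hs
      have hs0 : (0:ℝ) < s := lt_of_lt_of_le ht₀pos hs
      exact (hEa' s hs0).continuousAt.continuousWithinAt
    · rw [interior_Ici]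
      intro s hs
      have hs0 : (0:ℝ) < s := lt_trans ht₀pos hs
      exact (hEa' s hs0).differentiableAt.differentiableWithinAt
    · rw [interior_Ici]
      intro t htt
      have htt' : t₀ < t := htt
      have ht0 : (0:ℝ) < t := lt_trans ht₀pos htt'
      rw [(hEa' t ht0).deriv]
      have hq := hSOS (-(cQ)/2) t t
      have hcRR := mul_le_mul_of_nonneg_right hcR1 (mul_nonneg (sq_nonneg t) (hRpos t))
      have h6 : K/μ ≤ t^2 := by rw [← ht₀sq]; nlinarith
      have h7 := mul_le_mul h6 (hFP t) (mul_nonneg hμ.le (hPpos t)) (sq_nonneg t)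
      have hKP : K * P t ≤ t^2 * F t := by
        have h8 : K/μ*(μ*P t) = K*P t := by field_simp
        rw [← h8]; exact h7
      have hKbP := mul_le_mul_of_nonneg_right hcKb (hPpos t)
      have hinner : -(t^2*F t) + cR*(t^2*R t) + cQ*(t*Q t) + cP*(P t) ≤ 0 := by
        linarith only [hq, hcRR, hKP, hKbP]
      have e2 : t^(a-1) = t^(a-2)*t := by rw [← hpow t ht0 (a-2)]; congr 1; ring
      have e3 : t^(a-2) = t^(a-3)*t := by rw [← hpow t ht0 (a-3)]; congr 1; ring
      have hτ : (0:ℝ) ≤ t^(a-3) := (Real.rpow_pos_of_pos ht0 _).le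
      rw [e2, e3]
      linarith only [mul_nonneg hτ (neg_nonneg.2 hinner)]
  -- lower bound for Ea and value at t₀
  have hEalow : ∀ t : ℝ, 0 < t → t^a * F t ≤ Ea t := by
    intro t ht0
    have e1 : t^a = t^(a-1)*t := by rw [← hpow t ht0 (a-1)]; congr 1; ring
    have e2 : t^(a-1) = t^(a-2)*t := by rw [← hpow t ht0 (a-2)]; congr 1; ring
    have hτ : (0:ℝ) ≤ t^(a-2) := (Real.rpow_pos_of_pos ht0 _).le
    rw [hEadef]
    simp only
    rw [e1, e2]
    linarith only [mul_nonneg hτ (hSOS b t t)]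
  have hEat₀ : Ea t₀ ≤ t₀^(a-2) * (C4 * P 0) := by
    have e1 : t₀^a = t₀^(a-1)*t₀ := by rw [← hpow t₀ ht₀pos (a-1)]; congr 1; ring
    have e2 : t₀^(a-1) = t₀^(a-2)*t₀ := by rw [← hpow t₀ ht₀pos (a-2)]; congr 1; ring
    have hτ : (0:ℝ) ≤ t₀^(a-2) := (Real.rpow_pos_of_pos ht₀pos _).le
    have hb' : (0:ℝ) ≤ b := by linarith
    have hF₀ := (hkey t₀ ht₀pos).2.1
    have hR₀ := hRb t₀ ht₀pos
    have hP₀ := hPb t₀ ht₀pos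
    have hQ₀ : 2*t₀*Q t₀ ≤ t₀^2*R t₀ + P t₀ := by linarith only [hSOS 1 (-t₀) t₀]
    have hbQ := mul_le_mul_of_nonneg_left hQ₀ hb'
    have hbRP := mul_le_mul_of_nonneg_left
      (show t₀^2*R t₀ + P t₀ ≤ C3*P 0 + C2*P 0 by linarith only [hR₀, hP₀]) hb'
    have hb2P := mul_le_mul_of_nonneg_left hP₀ (sq_nonneg b)
    have hinner : t₀^2*F t₀ + t₀^2*R t₀ + 2*b*(t₀*Q t₀) + b^2*(P t₀) ≤ C4 * P 0 := by
      rw [hC4def]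
      linarith only [hF₀, hR₀, hbQ, hbRP, hb2P]
    calc Ea t₀ = t₀^(a-2) * (t₀^2*F t₀ + t₀^2*R t₀ + 2*b*(t₀*Q t₀) + b^2*(P t₀)) := by
          rw [hEadef]; simp only; rw [e1, e2]; ring
      _ ≤ t₀^(a-2) * (C4 * P 0) := mul_le_mul_of_nonneg_left hinner hτ
  -- final assembly
  intro t ht
  rw [hPsum t, hPsum 0]
  have hP0 : 0 ≤ P 0 := hPpos 0
  have hXpos : 0 < t^a * μ^(a/2) :=
    mul_pos (Real.rpow_pos_of_pos ht a) (Real.rpow_pos_of_pos hμ _)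
  have ht₀a : t₀ ^ a = (K/μ)^(a/2) := by
    rw [ht₀def, Real.sqrt_eq_rpow, ← Real.rpow_mul hKμ.le]
    congr 1; ring
  have hmain : t^a * μ^(a/2) * P t ≤ (K^(a/2)*(C2+C4)) * P 0 := by
    rcases le_or_gt t t₀ with hcase | hcase
    · have hta : t^a ≤ t₀^a := Real.rpow_le_rpow ht.le hcase (by linarith)
      have hBK : t₀^a * μ^(a/2) = K^(a/2) := by
        rw [ht₀a, ← Real.mul_rpow hKμ.le hμ.le, div_mul_cancel₀ _ (ne_of_gt hμ)]
      have hPt := hPb t ht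
      have hAB : t^a * μ^(a/2) ≤ t₀^a * μ^(a/2) :=
        mul_le_mul_of_nonneg_right hta (Real.rpow_nonneg hμ.le _)
      have hBpos : (0:ℝ) ≤ t₀^a * μ^(a/2) :=
        mul_nonneg (Real.rpow_nonneg ht₀pos.le _) (Real.rpow_nonneg hμ.le _)
      calc t^a * μ^(a/2) * P t ≤ (t₀^a * μ^(a/2)) * P t :=
            mul_le_mul_of_nonneg_right hAB (hPpos t)
        _ ≤ (t₀^a * μ^(a/2)) * (C2 * P 0) := mul_le_mul_of_nonneg_left hPt hBpos
        _ = K^(a/2) * (C2 * P 0) := by rw [hBK]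
        _ ≤ (K^(a/2)*(C2+C4)) * P 0 := by
            nlinarith [mul_nonneg (mul_nonneg (Real.rpow_nonneg hK0.le (a/2)) hC4pos.le) hP0]
    · have hmem₀ : t₀ ∈ Ici t₀ := self_mem_Ici
      have hmemt : t ∈ Ici t₀ := le_of_lt hcase
      have hmono := hEaanti hmem₀ hmemt (le_of_lt hcase)
      have hlow : μ * (t^a * P t) ≤ t^a * F t := by
        have := mul_le_mul_of_nonneg_left (hFP t) (Real.rpow_nonneg ht.le a)
        linarith [this]
      have hchain : μ * (t^a * P t) ≤ t₀^(a-2) * (C4 * P 0) :=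
        le_trans hlow (le_trans (hEalow t ht) (le_trans hmono hEat₀))
      have hμsplit : μ^(a/2) = μ^(a/2-1)*μ := by
        have h := Real.rpow_add hμ (a/2-1) 1
        rw [Real.rpow_one] at h
        rw [show a/2-1+1 = a/2 by ring] at h
        exact h
      have ht₀a2 : t₀^(a-2) = (K/μ)^((a-2)/2) := by
        rw [ht₀def, Real.sqrt_eq_rpow, ← Real.rpow_mul hKμ.le]
        congr 1; ring
      have hcollapse : μ^(a/2-1) * t₀^(a-2) = K^((a-2)/2) := by
        rw [ht₀a2, Real.div_rpow hK0.le hμ.le]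
        rw [show a/2-1 = (a-2)/2 by ring]
        field_simp
      have hKe : K^((a-2)/2) ≤ K^(a/2) :=
        Real.rpow_le_rpow_of_exponent_le hK1 (by linarith)
      have hμe : (0:ℝ) ≤ μ^(a/2-1) := Real.rpow_nonneg hμ.le _
      calc t^a * μ^(a/2) * P t = μ^(a/2-1) * (μ * (t^a * P t)) := by
            rw [hμsplit]; ring
        _ ≤ μ^(a/2-1) * (t₀^(a-2) * (C4 * P 0)) := mul_le_mul_of_nonneg_left hchain hμe
        _ = K^((a-2)/2) * (C4 * P 0) := by rw [← hcollapse]; ring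
        _ ≤ (K^(a/2)*(C2+C4)) * P 0 := by
            have h1 : K^((a-2)/2) * (C4 * P 0) ≤ K^(a/2) * (C4 * P 0) :=
              mul_le_mul_of_nonneg_right hKe (mul_nonneg hC4pos.le hP0)
            nlinarith [mul_nonneg (mul_nonneg (Real.rpow_nonneg hK0.le (a/2)) hC2pos.le) hP0]
  have hrw : (K^(a/2)*(C2+C4)) / (t^a * μ^(a/2)) * (1/2 * P 0)
      = ((K^(a/2)*(C2+C4)) * (1/2 * P 0)) / (t^a * μ^(a/2)) := by ring
  rw [hrw, le_div_iff₀ hXpos]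
  linarith [hmain]
end

section
/- Let p be a positive integer, γ > 0, and a a real number with γ − a/2 + 1 > 0, and K ≥ 0. Let w : (0,∞) → ℝᵖ be twice continuously differentiable and g : (0,∞) → ℝᵖ continuous with ‖g(t)‖ ≤ K·t^{−a/2} for all t > 0. Suppose w''(t) + (γ/t)·w'(t) + g(t) = 0 for all t > 0, and t^{γ}·‖w'(t)‖ → 0 as t → 0⁺. Then ‖w'(t)‖ ≤ (K/(γ − a/2 + 1))·t^{1−a/2} for all t > 0. -/
open Real Set Filter

/-- Nesterov weight dynamics `w'' + (γ/t)w' + g = 0` with polynomially decaying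
forcing `‖g(t)‖ ≤ K t^{-a/2}`: the velocity satisfies
`‖w'(t)‖ ≤ (K/(γ - a/2 + 1)) t^{1 - a/2}`. -/
theorem nesterov_velocity_polynomial_bound
    (p : ℕ) (hp : 0 < p) (γ a K : ℝ) (hγ : 0 < γ) (hγa : 0 < γ - a / 2 + 1)
    (hK : 0 ≤ K)
    (w g : ℝ → (Fin p → ℝ))
    (hw : ContDiffOn ℝ 2 w (Set.Ioi 0))
    (hg : ContinuousOn g (Set.Ioi 0))
    (hgb : ∀ t : ℝ, 0 < t → Real.sqrt (∑ i, (g t i) ^ 2) ≤ K * t ^ (-a / 2))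
    (hODE : ∀ t : ℝ, 0 < t →
      deriv (deriv w) t + (γ / t) • deriv w t + g t = 0)
    (hinit : Filter.Tendsto (fun t : ℝ => t ^ γ * Real.sqrt (∑ i, (deriv w t i) ^ 2))
      (nhdsWithin 0 (Set.Ioi 0)) (nhds 0)) :
    ∀ t : ℝ, 0 < t →
      Real.sqrt (∑ i, (deriv w t i) ^ 2)
        ≤ (K / (γ - a / 2 + 1)) * t ^ (1 - a / 2) := by
  intro t ht
  set c : ℝ := γ - a / 2 + 1 with hc
  set e : (Fin p → ℝ) ≃L[ℝ] EuclideanSpace ℝ (Fin p) :=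
    (EuclideanSpace.equiv (Fin p) ℝ).symm with he
  have hnorm : ∀ x : Fin p → ℝ, ‖e x‖ = Real.sqrt (∑ i, (x i) ^ 2) := by
    intro x
    rw [EuclideanSpace.norm_eq]
    congr 1
    exact Finset.sum_congr rfl fun i _ => by rw [Real.norm_eq_abs, sq_abs]; rfl
  set V : ℝ → EuclideanSpace ℝ (Fin p) := fun s => e (deriv w s) with hVdef
  set G : ℝ → EuclideanSpace ℝ (Fin p) := fun s => e (g s) with hGdef
  have hw1 : ContDiffOn ℝ 1 (deriv w) (Ioi 0) :=
    hw.deriv_of_isOpen isOpen_Ioi (by norm_num)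
  have hVd : ∀ s : ℝ, 0 < s → HasDerivAt V (e (deriv (deriv w) s)) s := by
    intro s hs
    have h1 : DifferentiableAt ℝ (deriv w) s :=
      (hw1.contDiffAt (isOpen_Ioi.mem_nhds hs)).differentiableAt one_ne_zero
    exact e.toContinuousLinearMap.hasFDerivAt.comp_hasDerivAt s h1.hasDerivAt
  have hODE' : ∀ s : ℝ, 0 < s →
      e (deriv (deriv w) s) = -((γ / s) • V s + G s) := by
    intro s hs
    have h := hODE s hs
    rw [add_assoc] at h
    have h2 : deriv (deriv w) s = -((γ / s) • deriv w s + g s) :=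
      eq_neg_of_add_eq_zero_left h
    rw [h2, map_neg, map_add, map_smul]
  set F : ℝ → EuclideanSpace ℝ (Fin p) := fun s => s ^ γ • V s with hFdef
  have hFd : ∀ s : ℝ, 0 < s → HasDerivAt F (-(s ^ γ • G s)) s := by
    intro s hs
    have h1 : HasDerivAt (fun u : ℝ => u ^ γ) (γ * s ^ (γ - 1)) s :=
      Real.hasDerivAt_rpow_const (Or.inl hs.ne')
    have h2 := h1.smul (hVd s hs)
    refine h2.congr_deriv ?_
    rw [hODE' s hs, smul_neg, smul_add, smul_smul]
    have h3 : s ^ γ * (γ / s) = γ * s ^ (γ - 1) := by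
      rw [Real.rpow_sub_one hs.ne']
      field_simp
    rw [h3]
    abel
  have hGnorm : ∀ s : ℝ, 0 < s → ‖G s‖ ≤ K * s ^ (-a / 2) := by
    intro s hs
    rw [hGdef]
    simpa [hnorm] using hgb s hs
  -- key estimate
  have key : ∀ ε ∈ Ioo (0 : ℝ) t, ‖F t‖ ≤ ‖F ε‖ + K / c * t ^ c := by
    intro ε hε
    obtain ⟨hε0, hεt⟩ := hε
    have hsub : uIcc ε t ⊆ Ioi 0 := by
      rw [uIcc_of_le hεt.le]
      exact fun x hx => lt_of_lt_of_le hε0 hx.1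
    have hGint : IntervalIntegrable (fun s => -(s ^ γ • G s)) MeasureTheory.volume ε t := by
      apply ContinuousOn.intervalIntegrable
      apply ContinuousOn.neg
      apply ContinuousOn.fun_smul
      · exact continuousOn_id.rpow_const fun x hx => Or.inl (ne_of_gt (hsub hx))
      · exact (e.continuous.comp_continuousOn hg).mono hsub
    have heq : ∫ s in ε..t, -(s ^ γ • G s) = F t - F ε :=
      intervalIntegral.integral_eq_sub_of_hasDerivAt (fun s hs => hFd s (hsub hs)) hGint
    have hbint : IntervalIntegrable (fun s : ℝ => K * s ^ (γ - a / 2))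
        MeasureTheory.volume ε t := by
      apply ContinuousOn.intervalIntegrable
      exact continuousOn_const.mul
        (continuousOn_id.rpow_const fun x hx => Or.inl (ne_of_gt (hsub hx)))
    have hγa' : 0 < γ - a / 2 + 1 := hc ▸ hγa
    have hm1 : (-1 : ℝ) < γ - a / 2 := by linarith
    have hεc : ε ^ c ≤ t ^ c := Real.rpow_le_rpow hε0.le hεt.le (le_of_lt hγa)
    have hεc0 : 0 ≤ ε ^ c := Real.rpow_nonneg hε0.le c
    have hbound : ‖∫ s in ε..t, -(s ^ γ • G s)‖ ≤ K / c * t ^ c := by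
      have hae : ∀ᵐ s ∂(MeasureTheory.volume.restrict (Set.uIoc ε t)),
          ‖-(s ^ γ • G s)‖ ≤ K * s ^ (γ - a / 2) := by
        refine (MeasureTheory.ae_restrict_mem measurableSet_uIoc).mono fun s hs => ?_
        have hs0 : 0 < s := by
          rw [uIoc_of_le hεt.le] at hs
          exact lt_trans hε0 hs.1
        rw [norm_neg, norm_smul, Real.norm_rpow_of_nonneg hs0.le,
          Real.norm_eq_abs, abs_of_pos hs0]
        calc s ^ γ * ‖G s‖ ≤ s ^ γ * (K * s ^ (-a / 2)) :=
              mul_le_mul_of_nonneg_left (hGnorm s hs0) (Real.rpow_nonneg hs0.le γ)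
          _ = K * s ^ (γ - a / 2) := by
              rw [show s ^ γ * (K * s ^ (-a / 2)) = K * (s ^ γ * s ^ (-a / 2)) from by ring,
                ← Real.rpow_add hs0]
              ring_nf
      have h1 := intervalIntegral.norm_integral_le_abs_of_norm_le hae hbint
      have h2 : ∫ s in ε..t, K * s ^ (γ - a / 2) = K * ((t ^ c - ε ^ c) / c) := by
        rw [intervalIntegral.integral_const_mul, integral_rpow (Or.inl hm1), hc]
      rw [h2] at h1
      have h3 : 0 ≤ K * ((t ^ c - ε ^ c) / c) :=
        mul_nonneg hK (div_nonneg (by linarith) (le_of_lt hγa))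
      rw [abs_of_nonneg h3] at h1
      refine h1.trans ?_
      rw [div_mul_eq_mul_div, mul_div_assoc]
      gcongr
      linarith
    have := heq ▸ hbound
    have h4 : ‖F t‖ - ‖F ε‖ ≤ ‖F t - F ε‖ := norm_sub_norm_le _ _
    linarith
  -- limit step
  have hFlim : Tendsto (fun ε => ‖F ε‖) (nhdsWithin 0 (Ioi 0)) (nhds 0) := by
    apply hinit.congr'
    filter_upwards [self_mem_nhdsWithin] with ε hε
    rw [hFdef, norm_smul, Real.norm_rpow_of_nonneg (le_of_lt hε), Real.norm_eq_abs,
      abs_of_pos hε, hVdef, hnorm]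
  have hFt : ‖F t‖ ≤ K / c * t ^ c := by
    have h1 : Tendsto (fun ε => ‖F ε‖ + K / c * t ^ c) (nhdsWithin 0 (Ioi 0))
        (nhds (0 + K / c * t ^ c)) := hFlim.add tendsto_const_nhds
    rw [zero_add] at h1
    refine ge_of_tendsto h1 ?_
    filter_upwards [Ioo_mem_nhdsGT_of_mem (⟨le_rfl, ht⟩ : (0:ℝ) ∈ Ico 0 t)] with ε hε
    exact key ε hε
  -- conclude
  have hVt : Real.sqrt (∑ i, (deriv w t i) ^ 2) = ‖V t‖ := (hnorm _).symm
  rw [hVt]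
  have htγ : 0 < t ^ γ := Real.rpow_pos_of_pos ht γ
  have hcc : t ^ c = t ^ γ * t ^ (1 - a / 2) := by
    rw [← Real.rpow_add ht]
    congr 1
    rw [hc]; ring
  have hFt' : t ^ γ * ‖V t‖ ≤ t ^ γ * (K / c * t ^ (1 - a / 2)) := by
    have h5 : t ^ γ * ‖V t‖ = ‖F t‖ := by
      rw [hFdef, norm_smul, Real.norm_rpow_of_nonneg ht.le, Real.norm_eq_abs,
        abs_of_pos ht]
    rw [h5]
    calc ‖F t‖ ≤ K / c * t ^ c := hFt
      _ = t ^ γ * (K / c * t ^ (1 - a / 2)) := by rw [hcc]; ring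
  exact le_of_mul_le_mul_left hFt' htγ
end

section
/- Let p be a positive integer, γ ≥ 0, and let L : ℝᵖ → ℝ be continuously differentiable with L(x) ≥ 0 for all x. Let w : [0,∞) → ℝᵖ be continuous on [0,∞), twice continuously differentiable on (0,∞), satisfy w'(t) → 0 as t → 0⁺, and satisfy w''(t) + (γ/t)·w'(t) + ∇L(w(t)) = 0 for all t > 0. Then ‖w'(t)‖ ≤ √(2·L(w(0))) for all t > 0. -/
open Real Set Filter

/-- Velocity bound from energy monotonicity for the Nesterov weight dynamics:
if `L ≥ 0` then `‖w'(t)‖ ≤ √(2 L(w(0)))` for all `t > 0`. -/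
theorem nesterov_velocity_energy_bound
    (p : ℕ) (hp : 0 < p) (γ : ℝ) (hγ : 0 ≤ γ)
    (L : (Fin p → ℝ) → ℝ) (hL : ContDiff ℝ 1 L) (hLnn : ∀ x, 0 ≤ L x)
    (w : ℝ → (Fin p → ℝ))
    (hwc : ContinuousOn w (Set.Ici 0))
    (hw : ContDiffOn ℝ 2 w (Set.Ioi 0))
    (hinit : Filter.Tendsto (deriv w) (nhdsWithin 0 (Set.Ioi 0)) (nhds 0))
    (hODE : ∀ t : ℝ, 0 < t →
      deriv (deriv w) t + (γ / t) • deriv w t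
        + (fun i => fderiv ℝ L (w t) (Pi.single i 1)) = 0) :
    ∀ t : ℝ, 0 < t →
      Real.sqrt (∑ i, (deriv w t i) ^ 2) ≤ Real.sqrt (2 * L (w 0)) := by
  intro t ht
  set E : ℝ → ℝ := fun s => L (w s) + (1/2) * ∑ i, (deriv w s i)^2 with hEdef
  have hwd : DifferentiableOn ℝ w (Set.Ioi 0) := hw.differentiableOn (by norm_num)
  have hdw : ContDiffOn ℝ 1 (deriv w) (Set.Ioi 0) :=
    hw.deriv_of_isOpen isOpen_Ioi (by norm_num)
  have hwdiff : ∀ s ∈ Set.Ioi (0:ℝ), HasDerivAt w (deriv w s) s := fun s hs =>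
    ((hwd s hs).differentiableAt (Ioi_mem_nhds hs)).hasDerivAt
  have hdwdiff : ∀ s ∈ Set.Ioi (0:ℝ), HasDerivAt (deriv w) (deriv (deriv w) s) s := fun s hs =>
    (((hdw.differentiableOn one_ne_zero) s hs).differentiableAt (Ioi_mem_nhds hs)).hasDerivAt
  have hE' : ∀ s ∈ Set.Ioi (0:ℝ),
      HasDerivAt E (-(γ/s) * ∑ i, (deriv w s i)^2) s := by
    intro s hs
    have h1 : HasDerivAt (fun u => L (w u)) (fderiv ℝ L (w s) (deriv w s)) s :=
      (hL.differentiable one_ne_zero (w s)).hasFDerivAt.comp_hasDerivAt s (hwdiff s hs)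
    have h2 : ∀ i : Fin p, HasDerivAt (fun u => (deriv w u i)^2)
        (2 * deriv w s i * deriv (deriv w) s i) s := by
      intro i
      have hc : HasDerivAt (fun u => deriv w u i) (deriv (deriv w) s i) s :=
        hasDerivAt_pi.1 (hdwdiff s hs) i
      simpa using hc.fun_pow 2
    have h3 : HasDerivAt (fun u => ∑ i, (deriv w u i)^2)
        (∑ i, 2 * deriv w s i * deriv (deriv w) s i) s :=
      HasDerivAt.fun_sum fun i _ => h2 i
    have h4 : HasDerivAt E
        (fderiv ℝ L (w s) (deriv w s)
          + (1/2) * ∑ i, 2 * deriv w s i * deriv (deriv w) s i) s :=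
      h1.add (h3.const_mul (1/2))
    have hode : ∀ i, deriv (deriv w) s i
        = -((γ/s) * deriv w s i) - fderiv ℝ L (w s) (Pi.single i 1) := by
      intro i
      have := congrFun (hODE s hs) i
      simp only [Pi.add_apply, Pi.smul_apply, smul_eq_mul, Pi.zero_apply] at this
      linarith
    have key : fderiv ℝ L (w s) (deriv w s)
        = ∑ i, deriv w s i * fderiv ℝ L (w s) (Pi.single i 1) := by
      have hrepr : deriv w s = ∑ i, (deriv w s i) • (Pi.single i (1:ℝ) : Fin p → ℝ) := by
        ext j
        simp [Pi.single_apply]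
      conv_lhs => rw [hrepr]
      rw [map_sum]
      simp [smul_eq_mul]
    have heq : fderiv ℝ L (w s) (deriv w s)
          + (1/2) * ∑ i, 2 * deriv w s i * deriv (deriv w) s i
        = -(γ/s) * ∑ i, (deriv w s i)^2 := by
      rw [key]
      simp only [hode]
      rw [Finset.mul_sum, Finset.mul_sum, ← Finset.sum_add_distrib]
      apply Finset.sum_congr rfl
      intro i _
      ring
    rw [heq] at h4
    exact h4
  have hanti : AntitoneOn E (Set.Ioi 0) := by
    apply antitoneOn_of_deriv_nonpos (convex_Ioi 0)
    · exact fun s hs => (hE' s hs).continuousAt.continuousWithinAt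
    · intro s hs
      rw [interior_Ioi] at hs
      exact (hE' s hs).differentiableAt.differentiableWithinAt
    · intro s hs
      rw [interior_Ioi] at hs
      rw [(hE' s hs).deriv]
      apply mul_nonpos_of_nonpos_of_nonneg
      · simp only [neg_nonpos]
        exact div_nonneg hγ (le_of_lt hs)
      · exact Finset.sum_nonneg fun i _ => sq_nonneg _
  have hlim : Tendsto E (nhdsWithin 0 (Set.Ioi 0)) (nhds (L (w 0))) := by
    have hwc0 : Tendsto w (nhdsWithin 0 (Set.Ioi 0)) (nhds (w 0)) :=
      (hwc 0 self_mem_Ici).mono_left (nhdsWithin_mono 0 Ioi_subset_Ici_self)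
    have h1 : Tendsto (fun s => L (w s)) (nhdsWithin 0 (Set.Ioi 0)) (nhds (L (w 0))) :=
      (hL.continuous.tendsto (w 0)).comp hwc0
    have hg : Continuous (fun v : Fin p → ℝ => (1/2:ℝ) * ∑ i, (v i)^2) := by
      continuity
    have h2 := (hg.tendsto 0).comp hinit
    simp only [Pi.zero_apply, Function.comp] at h2
    have h2' : Tendsto (fun s => (1/2:ℝ) * ∑ i, (deriv w s i)^2)
        (nhdsWithin 0 (Set.Ioi 0)) (nhds 0) := by
      simpa [Function.comp_def] using h2
    simpa [hEdef] using h1.add h2'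
  have hEt : E t ≤ L (w 0) := by
    apply ge_of_tendsto hlim
    filter_upwards [Ioo_mem_nhdsGT_of_mem (Set.mem_Ico.2 ⟨le_refl 0, ht⟩)] with s hs
    exact hanti hs.1 ht (le_of_lt hs.2)
  have hsum : ∑ i, (deriv w t i)^2 ≤ 2 * L (w 0) := by
    have hLt := hLnn (w t)
    have : L (w t) + (1/2) * ∑ i, (deriv w t i)^2 ≤ L (w 0) := hEt
    linarith
  exact Real.sqrt_le_sqrt hsum
end

section
/- Let n, p, m be positive integers and c > 0. Let A₁, …, A_m be real n×p matrices such that for each r, the p×p matrix A_rᵀA_r is positive definite and c·I − A_rᵀA_r is positive semidefinite. Then for every v ∈ ℝⁿ, vᵀ(∑_{r=1}^{m} A_r (A_rᵀA_r)^{−1} A_rᵀ) v ≥ (1/c) · vᵀ(∑_{r=1}^{m} A_r A_rᵀ) v. -/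
open Matrix

open scoped MatrixOrder in
lemma newton_aux {p : ℕ} {c : ℝ} (hc : 0 < c) {M : Matrix (Fin p) (Fin p) ℝ}
    (hM : M.PosDef) (hub : (c • (1 : Matrix (Fin p) (Fin p) ℝ) - M).PosSemidef)
    (w : Fin p → ℝ) :
    (1 / c) * (w ⬝ᵥ w) ≤ w ⬝ᵥ M⁻¹.mulVec w := by
  have hdet : IsUnit M.det := isUnit_iff_ne_zero.mpr hM.det_pos.ne'
  set u := M⁻¹.mulVec w with hu
  have hw : M.mulVec u = w := by
    rw [hu, mulVec_mulVec, Matrix.mul_nonsing_inv M hdet, one_mulVec]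
  have hsym : Mᵀ = M := by
    have := hM.isHermitian
    rw [← Matrix.conjTranspose_eq_transpose_of_trivial]; exact this
  set S := CFC.sqrt M with hS
  have hSsym : Sᴴ = S := (Matrix.nonneg_iff_posSemidef.mp (CFC.sqrt_nonneg M)).isHermitian
  have hSS : S * S = M := CFC.sqrt_mul_sqrt_self M hM.posSemidef.nonneg
  have hpsd : (S * (c • (1 : Matrix (Fin p) (Fin p) ℝ) - M) * S).PosSemidef := by
    have := hub.conjTranspose_mul_mul_same S
    rwa [hSsym] at this
  have hEq : S * (c • (1 : Matrix (Fin p) (Fin p) ℝ) - M) * S = c • M - M * M := by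
    rw [Matrix.mul_sub, Matrix.sub_mul, Matrix.mul_smul, Matrix.mul_one,
      Matrix.smul_mul, hSS]
    have : S * M * S = M * M := by
      rw [← hSS]; simp only [Matrix.mul_assoc]
    rw [this]
  have hkey : 0 ≤ u ⬝ᵥ (c • M - M * M).mulVec u := by
    have := hpsd.dotProduct_mulVec_nonneg u
    rw [hEq] at this
    simpa using this
  -- expand the quadratic form
  have h1 : u ⬝ᵥ M.mulVec u = w ⬝ᵥ M⁻¹.mulVec w := by
    rw [hw]
    exact dotProduct_comm u w
  have h2 : u ⬝ᵥ (M * M).mulVec u = w ⬝ᵥ w := by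
    rw [← mulVec_mulVec, hw, dotProduct_mulVec, ← mulVec_transpose, hsym, hw]
  rw [sub_mulVec, dotProduct_sub, smul_mulVec, dotProduct_smul, h1, h2,
    sub_nonneg, smul_eq_mul] at hkey
  rw [div_mul_eq_mul_div, one_mul, div_le_iff₀ hc]
  linarith [hkey]

/-- The Newton–Raphson kernel `∑_r A_r (A_rᵀ A_r)⁻¹ A_rᵀ` dominates `(1/c)`
times the neural tangent kernel `∑_r A_r A_rᵀ` when `c` upper-bounds the
eigenvalues of every `A_rᵀ A_r`. -/
theorem newton_kernel_lower_bound
    (n p m : ℕ) (hn : 0 < n) (hp : 0 < p) (hm : 0 < m)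
    (c : ℝ) (hc : 0 < c)
    (A : Fin m → Matrix (Fin n) (Fin p) ℝ)
    (hpd : ∀ r, ((A r)ᵀ * A r).PosDef)
    (hub : ∀ r, (c • (1 : Matrix (Fin p) (Fin p) ℝ) - (A r)ᵀ * A r).PosSemidef) :
    ∀ v : Fin n → ℝ,
      (1 / c) * (v ⬝ᵥ (∑ r, A r * (A r)ᵀ).mulVec v)
        ≤ v ⬝ᵥ (∑ r, A r * ((A r)ᵀ * A r)⁻¹ * (A r)ᵀ).mulVec v := by
  intro v
  have hterm : ∀ r : Fin m,
      (1 / c) * (v ⬝ᵥ (A r * (A r)ᵀ).mulVec v)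
        ≤ v ⬝ᵥ (A r * ((A r)ᵀ * A r)⁻¹ * (A r)ᵀ).mulVec v := by
    intro r
    set w := (A r)ᵀ.mulVec v with hwdef
    have e1 : v ⬝ᵥ (A r * (A r)ᵀ).mulVec v = w ⬝ᵥ w := by
      rw [← mulVec_mulVec, dotProduct_mulVec, ← mulVec_transpose, hwdef]
    have e2 : v ⬝ᵥ (A r * ((A r)ᵀ * A r)⁻¹ * (A r)ᵀ).mulVec v
        = w ⬝ᵥ ((A r)ᵀ * A r)⁻¹.mulVec w := by
      rw [← mulVec_mulVec, ← mulVec_mulVec, dotProduct_mulVec, ← mulVec_transpose, hwdef]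
    rw [e1, e2]
    exact newton_aux hc (hpd r) (hub r) w
  have hsum : ∀ (M : Fin m → Matrix (Fin n) (Fin n) ℝ),
      (∑ r, M r).mulVec v = ∑ r, (M r).mulVec v := fun M =>
    map_sum (Matrix.mulVec.addMonoidHomLeft v) M Finset.univ
  have hdot : ∀ (f : Fin m → Fin n → ℝ), v ⬝ᵥ (∑ r, f r) = ∑ r, v ⬝ᵥ f r := by
    intro f
    simp only [dotProduct, Finset.sum_apply, Finset.mul_sum]
    rw [Finset.sum_comm]
  calc (1 / c) * (v ⬝ᵥ (∑ r, A r * (A r)ᵀ).mulVec v)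
      = ∑ r, (1 / c) * (v ⬝ᵥ (A r * (A r)ᵀ).mulVec v) := by
        rw [hsum, hdot, Finset.mul_sum]
    _ ≤ ∑ r, v ⬝ᵥ (A r * ((A r)ᵀ * A r)⁻¹ * (A r)ᵀ).mulVec v :=
        Finset.sum_le_sum fun r _ => hterm r
    _ = v ⬝ᵥ (∑ r, A r * ((A r)ᵀ * A r)⁻¹ * (A r)ᵀ).mulVec v := by
        rw [hsum, hdot]
end

section
/- Let n, p, m be positive integers and λ₀ > 0. For each t ≥ 0 and each r ∈ {1,…,m}, let A_r(t) be a real n×p matrix depending continuously on t such that: (i) A_r(t)ᵀA_r(t) is positive definite, (ii) every row of A_r(t) has Euclidean norm at most 1/√m, and (iii) vᵀ(∑_{r=1}^{m} A_r(t)A_r(t)ᵀ)v ≥ (λ₀/2)‖v‖² for all v ∈ ℝⁿ. Let Δ : ℝ → ℝⁿ be differentiable with Δ'(t) = −∑_{r=1}^{m} A_r(t)(A_r(t)ᵀA_r(t))^{−1}A_r(t)ᵀ·Δ(t) for all t ≥ 0. Then the loss L(t) := (1/2)‖Δ(t)‖² satisfies L(t) ≤ e^{−(λ₀·m/n)·t}·L(0)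 for all t ≥ 0. -/
open Matrix Real

private lemma dot_mulVec_key {q q' : ℕ} (M : Matrix (Fin q) (Fin q') ℝ) (a : Fin q → ℝ)
    (b : Fin q' → ℝ) : a ⬝ᵥ M *ᵥ b = (Mᵀ *ᵥ a) ⬝ᵥ b := by
  rw [mulVec_transpose, ← dotProduct_mulVec]

private lemma dot_sum_mulVec {q m : ℕ} (x : Fin q → ℝ) (M : Fin m → Matrix (Fin q) (Fin q) ℝ) :
    x ⬝ᵥ (∑ r, M r) *ᵥ x = ∑ r, x ⬝ᵥ (M r) *ᵥ x := by
  simp only [dotProduct, mulVec, Matrix.sum_apply, Finset.sum_apply,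
    Finset.mul_sum, Finset.sum_mul]
  calc ∑ a, ∑ b, ∑ r, x a * (M r a b * x b)
      = ∑ a, ∑ r, ∑ b, x a * (M r a b * x b) :=
        Finset.sum_congr rfl fun _ _ => Finset.sum_comm
  _ = ∑ r, ∑ a, ∑ b, x a * (M r a b * x b) := Finset.sum_comm

private theorem quad_inv_lower {q : ℕ} (B : Matrix (Fin q) (Fin q) ℝ) (hB : B.PosDef)
    (c : ℝ) (hc : 0 < c)
    (hbound : ∀ z : Fin q → ℝ, z ⬝ᵥ B *ᵥ z ≤ c * (z ⬝ᵥ z)) (y : Fin q → ℝ) :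
    c⁻¹ * (y ⬝ᵥ y) ≤ y ⬝ᵥ B⁻¹ *ᵥ y := by
  have hdet : IsUnit B.det := isUnit_iff_ne_zero.2 hB.det_pos.ne'
  obtain ⟨z, rfl⟩ : ∃ z, y = B *ᵥ z :=
    ⟨B⁻¹ *ᵥ y, by rw [mulVec_mulVec, Matrix.mul_nonsing_inv B hdet, one_mulVec]⟩
  have hS : B⁻¹ *ᵥ (B *ᵥ z) = z := by
    rw [mulVec_mulVec, Matrix.nonsing_inv_mul B hdet, one_mulVec]
  rw [hS]
  set S := (open MatrixOrder in CFC.sqrt B) with hSdef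
  have hSS : S * S = B := by open MatrixOrder in exact CFC.sqrt_mul_sqrt_self B hB.posSemidef.nonneg
  have hSsym : Sᵀ = S := by open MatrixOrder in exact (CFC.sqrt_nonneg B).posSemidef.isHermitian.eq
  set w := S *ᵥ z with hw
  have hBz : B *ᵥ z = S *ᵥ w := by rw [hw, mulVec_mulVec, hSS]
  have h1 : (B *ᵥ z) ⬝ᵥ z = w ⬝ᵥ w := by
    rw [hBz, dotProduct_comm, dot_mulVec_key, hSsym]
  have h2 : (B *ᵥ z) ⬝ᵥ (B *ᵥ z) = w ⬝ᵥ B *ᵥ w := by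
    rw [hBz, dot_mulVec_key, hSsym, mulVec_mulVec, hSS, dotProduct_comm, dot_mulVec_key]
  rw [h1, h2]
  calc c⁻¹ * (w ⬝ᵥ B *ᵥ w) ≤ c⁻¹ * (c * (w ⬝ᵥ w)) :=
        mul_le_mul_of_nonneg_left (hbound w) (by positivity)
  _ = w ⬝ᵥ w := by field_simp

/-- Linear convergence of the MSE loss under the Newton–Raphson error dynamics
`Δ' = -∑_r A_r (A_rᵀ A_r)⁻¹ A_rᵀ Δ` for a width-`m` two-layer ReLU network:
`L(t) ≤ e^{-(λ₀ m / n) t} L(0)`. -/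
theorem newton_loss_linear_convergence
    (n p m : ℕ) (hn : 0 < n) (hp : 0 < p) (hm : 0 < m)
    (lam : ℝ) (hlam : 0 < lam)
    (A : ℝ → Fin m → Matrix (Fin n) (Fin p) ℝ)
    (hcont : ∀ r, Continuous fun t => A t r)
    (hpd : ∀ t : ℝ, 0 ≤ t → ∀ r, ((A t r)ᵀ * A t r).PosDef)
    (hrow : ∀ t : ℝ, 0 ≤ t → ∀ r i,
      Real.sqrt (∑ j, (A t r i j) ^ 2) ≤ 1 / Real.sqrt m)
    (hntk : ∀ t : ℝ, 0 ≤ t → ∀ v : Fin n → ℝ,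
      lam / 2 * ∑ i, (v i) ^ 2 ≤ v ⬝ᵥ (∑ r, A t r * (A t r)ᵀ).mulVec v)
    (Δ : ℝ → (Fin n → ℝ)) (hΔ : Differentiable ℝ Δ)
    (hODE : ∀ t : ℝ, 0 ≤ t →
      deriv Δ t = -(∑ r, A t r * ((A t r)ᵀ * A t r)⁻¹ * (A t r)ᵀ).mulVec (Δ t)) :
    ∀ t : ℝ, 0 ≤ t →
      (1 / 2) * ∑ i, (Δ t i) ^ 2
        ≤ Real.exp (-(lam * m / n) * t) * ((1 / 2) * ∑ i, (Δ 0 i) ^ 2) := by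
  have hn' : (0:ℝ) < n := by exact_mod_cast hn
  have hm' : (0:ℝ) < m := by exact_mod_cast hm
  set k : ℝ := lam * m / n with hk
  have hk0 : 0 < k := by positivity
  set c : ℝ := (n:ℝ) / m with hc
  have hc0 : 0 < c := by positivity
  have hdotsq : ∀ (z : Fin p → ℝ), z ⬝ᵥ z = ∑ j, (z j) ^ 2 := by
    intro z; simp [dotProduct, sq]
  -- Step 1: row bound gives quadratic bound on AᵀA
  have hbound : ∀ t : ℝ, 0 ≤ t → ∀ r (z : Fin p → ℝ),
      z ⬝ᵥ ((A t r)ᵀ * A t r) *ᵥ z ≤ c * (z ⬝ᵥ z) := by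
    intro t ht r z
    have h1 : z ⬝ᵥ ((A t r)ᵀ * A t r) *ᵥ z = ∑ i, (∑ j, A t r i j * z j) ^ 2 := by
      rw [← mulVec_mulVec, dot_mulVec_key, transpose_transpose]
      simp [dotProduct, mulVec, sq, Finset.mul_sum, mul_comm]
    rw [h1]
    have hrow' : ∀ i, (∑ j, (A t r i j) ^ 2) ≤ 1 / m := by
      intro i
      have h := hrow t ht r i
      have h0 : (0:ℝ) ≤ ∑ j, (A t r i j) ^ 2 := by positivity
      have := pow_le_pow_left₀ (Real.sqrt_nonneg _) h 2
      rwa [Real.sq_sqrt h0, div_pow, one_pow, Real.sq_sqrt hm'.le] at this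
    have hterm : ∀ i : Fin n, (∑ j, A t r i j * z j) ^ 2 ≤ (1 / m) * (z ⬝ᵥ z) := by
      intro i
      calc (∑ j, A t r i j * z j) ^ 2
          ≤ (∑ j, (A t r i j) ^ 2) * (∑ j, (z j) ^ 2) :=
            Finset.sum_mul_sq_le_sq_mul_sq Finset.univ _ _
      _ ≤ (1 / m) * (z ⬝ᵥ z) := by
            rw [hdotsq]
            exact mul_le_mul_of_nonneg_right (hrow' i) (by positivity)
    calc ∑ i, (∑ j, A t r i j * z j) ^ 2 ≤ ∑ _i : Fin n, (1 / m) * (z ⬝ᵥ z) :=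
          Finset.sum_le_sum fun i _ => hterm i
    _ = c * (z ⬝ᵥ z) := by
          rw [Finset.sum_const, Finset.card_univ, Fintype.card_fin, nsmul_eq_mul, hc]
          ring
  -- Step 2 & 3: projection quadratic form bound, summed
  have hproj : ∀ t : ℝ, 0 ≤ t → ∀ (x : Fin n → ℝ),
      k * ((1/2) * ∑ i, (x i) ^ 2)
        ≤ x ⬝ᵥ (∑ r, A t r * ((A t r)ᵀ * A t r)⁻¹ * (A t r)ᵀ) *ᵥ x := by
    intro t ht x
    have hr : ∀ r : Fin m,
        c⁻¹ * (x ⬝ᵥ (A t r * (A t r)ᵀ) *ᵥ x)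
          ≤ x ⬝ᵥ (A t r * ((A t r)ᵀ * A t r)⁻¹ * (A t r)ᵀ) *ᵥ x := by
      intro r
      have key := quad_inv_lower _ (hpd t ht r) c hc0 (hbound t ht r) ((A t r)ᵀ *ᵥ x)
      have e1 : x ⬝ᵥ (A t r * (A t r)ᵀ) *ᵥ x = ((A t r)ᵀ *ᵥ x) ⬝ᵥ ((A t r)ᵀ *ᵥ x) := by
        rw [← mulVec_mulVec, dot_mulVec_key]
      have e2 : x ⬝ᵥ (A t r * ((A t r)ᵀ * A t r)⁻¹ * (A t r)ᵀ) *ᵥ x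
          = ((A t r)ᵀ *ᵥ x) ⬝ᵥ ((A t r)ᵀ * A t r)⁻¹ *ᵥ ((A t r)ᵀ *ᵥ x) := by
        rw [Matrix.mul_assoc, ← mulVec_mulVec, dot_mulVec_key, mulVec_mulVec]
      rw [e1, e2]; exact key
    calc k * ((1/2) * ∑ i, (x i) ^ 2)
        = c⁻¹ * (lam / 2 * ∑ i, (x i) ^ 2) := by
          rw [hk, hc]; field_simp
    _ ≤ c⁻¹ * (x ⬝ᵥ (∑ r, A t r * (A t r)ᵀ) *ᵥ x) :=
          mul_le_mul_of_nonneg_left (hntk t ht x) (by positivity)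
    _ = ∑ r, c⁻¹ * (x ⬝ᵥ (A t r * (A t r)ᵀ) *ᵥ x) := by
          rw [dot_sum_mulVec, Finset.mul_sum]
    _ ≤ ∑ r, x ⬝ᵥ (A t r * ((A t r)ᵀ * A t r)⁻¹ * (A t r)ᵀ) *ᵥ x :=
          Finset.sum_le_sum fun r _ => hr r
    _ = x ⬝ᵥ (∑ r, A t r * ((A t r)ᵀ * A t r)⁻¹ * (A t r)ᵀ) *ᵥ x :=
          (dot_sum_mulVec _ _).symm
  -- Step 4: the loss and its derivative
  set L : ℝ → ℝ := fun t => (1/2) * ∑ i, (Δ t i) ^ 2 with hL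
  have hcomp : ∀ (t : ℝ) (i : Fin n), HasDerivAt (fun s => Δ s i) (deriv Δ t i) t := by
    intro t i
    exact (ContinuousLinearMap.proj (R := ℝ) (φ := fun _ : Fin n => ℝ)
      i).hasFDerivAt.comp_hasDerivAt t (hΔ t).hasDerivAt
  have hLder : ∀ t : ℝ, HasDerivAt L (Δ t ⬝ᵥ deriv Δ t) t := by
    intro t
    have hsum : HasDerivAt (fun s => ∑ i, (Δ s i) ^ 2)
        (∑ i, (2 : ℕ) * (Δ t i) ^ 1 * deriv Δ t i) t :=
      HasDerivAt.fun_sum fun i _ => (hcomp t i).fun_pow 2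
    have this : HasDerivAt L _ t := hsum.const_mul (1/2 : ℝ)
    convert this using 1
    simp only [dotProduct, pow_one, Nat.cast_ofNat]
    rw [Finset.mul_sum]
    exact Finset.sum_congr rfl fun i _ => by ring
  have hLnonneg : ∀ t : ℝ, 0 ≤ L t := by
    intro t; rw [hL]; positivity
  have hderivbound : ∀ t : ℝ, 0 ≤ t → deriv L t ≤ -k * L t := by
    intro t ht
    rw [(hLder t).deriv, hODE t ht, dotProduct_neg, neg_mul]
    exact neg_le_neg (hproj t ht (Δ t))
  -- Step 5: Gronwall via monotonicity of exp(kt) L t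
  set g : ℝ → ℝ := fun t => Real.exp (k * t) * L t with hg
  have hgder : ∀ t : ℝ,
      HasDerivAt g (k * Real.exp (k * t) * L t + Real.exp (k * t) * deriv L t) t := by
    intro t
    have h0 : HasDerivAt (fun t => k * t) k t := by
      simpa using (hasDerivAt_id t).const_mul k
    have he : HasDerivAt (fun t => Real.exp (k * t)) (Real.exp (k * t) * k) t := h0.exp
    have this : HasDerivAt g _ t := he.fun_mul (hLder t)
    convert this using 1
    rw [(hLder t).deriv]; ring
  have hgdiff : Differentiable ℝ g := fun x => (hgder x).differentiableAt
  have hanti : AntitoneOn g (Set.Ici (0:ℝ)) := by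
    apply antitoneOn_of_deriv_nonpos (convex_Ici 0) hgdiff.continuous.continuousOn
      (fun x _ => (hgdiff x).differentiableWithinAt)
    intro x hx
    rw [interior_Ici] at hx
    rw [(hgder x).deriv]
    have hb := hderivbound x (le_of_lt hx)
    have hexp : 0 < Real.exp (k * x) := Real.exp_pos _
    nlinarith [hLnonneg x]
  intro t ht
  have h2 : g t ≤ g 0 := hanti Set.self_mem_Ici ht ht
  have h3 : Real.exp (k * t) * L t ≤ L 0 := by
    simpa [hg] using h2
  have h4 : L t ≤ Real.exp (-(k * t)) * L 0 := by
    have h5 := mul_le_mul_of_nonneg_left h3 (Real.exp_nonneg (-(k * t)))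
    rwa [← mul_assoc, ← Real.exp_add, neg_add_cancel, Real.exp_zero, one_mul] at h5
  rw [neg_mul]
  exact h4
end
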